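/- arXiv:2604.21815 — 11 statements merged into one kernel-verified Lean document; each statement's English description precedes it below -/
import Mathlib

section
/- Let Π ∈ ℂ^{n×n} be a projection with Π ≠ 0 and Π ≠ I. Then ‖Π‖_B = ‖I−Π‖_B, and ‖Π‖_B² = 1 + sup_{x ∈ R(Π)^{⊥_B}, x≠0} ‖Πx‖_B²/‖x‖_B². Consequently ‖Π‖_B = 1 if and only if Π is B-orthogonal. -/
open Matrix Polynomial
open scoped ComplexOrder

noncomputable def bnormV {n : ℕ} (B : Matrix (Fin n) (Fin n) ℂ) (x : Fin n → ℂ) : ℝ :=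
  Real.sqrt ((star x ⬝ᵥ B.mulVec x).re)

noncomputable def bnormM {n : ℕ} (B C : Matrix (Fin n) (Fin n) ℂ) : ℝ :=
  sSup {r : ℝ | ∃ x : Fin n → ℂ, x ≠ 0 ∧ r = bnormV B (C.mulVec x) / bnormV B x}

noncomputable def badj {n : ℕ} (B A : Matrix (Fin n) (Fin n) ℂ) : Matrix (Fin n) (Fin n) ℂ :=
  B⁻¹ * Aᴴ * B

noncomputable def specRad {n : ℕ} (A : Matrix (Fin n) (Fin n) ℂ) : ℝ :=
  sSup ((fun μ : ℂ => ‖μ‖) '' spectrum ℂ A)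

noncomputable def lamMax {n : ℕ} (A : Matrix (Fin n) (Fin n) ℂ) : ℝ :=
  sSup {r : ℝ | (r : ℂ) ∈ spectrum ℂ A}

noncomputable def lamMinPos {n : ℕ} (A : Matrix (Fin n) (Fin n) ℂ) : ℝ :=
  sInf {r : ℝ | 0 < r ∧ (r : ℂ) ∈ spectrum ℂ A}

open scoped InnerProductSpace
open scoped MatrixOrder

noncomputable section KatoAux

variable {E : Type*} [NormedAddCommGroup E] [InnerProductSpace ℂ E] [FiniteDimensional ℂ E]

/-- orthogonal projection as an endomorphism -/
noncomputable def projCLM (U : Submodule ℂ E) : E →L[ℂ] E :=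
  U.subtypeL ∘L U.orthogonalProjectionOnto

lemma projCLM_apply (U : Submodule ℂ E) (x : E) :
    projCLM U x = (U.orthogonalProjectionOnto x : E) := rfl

lemma projCLM_mem (U : Submodule ℂ E) (x : E) : projCLM U x ∈ U := by
  simp [projCLM_apply]

lemma projCLM_eq_self (U : Submodule ℂ E) {x : E} (hx : x ∈ U) : projCLM U x = x := by
  exact Submodule.starProjection_eq_self_iff.2 hx

lemma projCLM_eq_zero (U : Submodule ℂ E) {x : E} (hx : x ∈ Uᗮ) : projCLM U x = 0 := by
  rw [projCLM_apply, Submodule.orthogonalProjectionOnto_apply_of_mem_orthogonal hx]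
  simp

lemma sub_projCLM_mem (U : Submodule ℂ E) (x : E) : x - projCLM U x ∈ Uᗮ :=
  Submodule.sub_starProjection_mem_orthogonal x

lemma projCLM_selfAdjoint (U : Submodule ℂ E) : IsSelfAdjoint (projCLM U) :=
  isSelfAdjoint_starProjection U

lemma projCLM_orthogonal (U : Submodule ℂ E) : projCLM Uᗮ = 1 - projCLM U := by
  ext x
  have := Submodule.starProjection_orthogonal_val (K := U) x
  exact this

lemma norm_sq_add_of_inner_zero {u v : E} (h : ⟪u, v⟫_ℂ = 0) :
    ‖u + v‖ ^ 2 = ‖u‖ ^ 2 + ‖v‖ ^ 2 := by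
  have := @norm_add_sq ℂ _ _ _ _ u v
  rw [h] at this
  simpa using this

end KatoAux

section Key

variable {E : Type*} [NormedAddCommGroup E] [InnerProductSpace ℂ E] [FiniteDimensional ℂ E]

lemma fix_of_mem_range {Q : E →L[ℂ] E} (hQ : Q ∘L Q = Q) {y : E}
    (hy : y ∈ Q.range) : Q y = y := by
  obtain ⟨z, rfl⟩ := hy
  calc Q (Q z) = (Q ∘L Q) z := rfl
  _ = Q z := by rw [hQ]

lemma one_le_norm_idem {Q : E →L[ℂ] E} (hQ : Q ∘L Q = Q) (h0 : Q ≠ 0) : (1:ℝ) ≤ ‖Q‖ := by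
  obtain ⟨z, hz⟩ : ∃ z, Q z ≠ 0 := by
    by_contra h
    push_neg at h
    exact h0 (by ext x; simp [h x])
  have hfix : Q (Q z) = Q z := fix_of_mem_range hQ ⟨z, rfl⟩
  have h1 : ‖Q z‖ ≤ ‖Q‖ * ‖Q z‖ := by
    conv_lhs => rw [← hfix]
    exact Q.le_opNorm _
  have hpos : 0 < ‖Q z‖ := norm_pos_iff.2 hz
  nlinarith

/-- pointwise bound on the orthogonal complement of the range -/
lemma pointwise_bound {Q : E →L[ℂ] E} (hQ : Q ∘L Q = Q) (h0 : Q ≠ 0)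
    {v : E} (hv : v ∈ (Q.range)ᗮ) :
    ‖Q v‖ ^ 2 ≤ (‖Q‖ ^ 2 - 1) * ‖v‖ ^ 2 := by
  have hN : (1:ℝ) ≤ ‖Q‖ := one_le_norm_idem hQ h0
  by_cases hw : Q v = 0
  · rw [hw]
    simp only [norm_zero]
    have h1 : (0:ℝ) ≤ ‖Q‖^2 - 1 := by nlinarith
    have h2 := mul_nonneg h1 (sq_nonneg (‖v‖:ℝ))
    nlinarith [h2]
  have hvne : v ≠ 0 := by rintro rfl; simp at hw
  set c : ℝ := ‖v‖ ^ 2 with hc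
  set d : ℝ := ‖Q v‖ ^ 2 with hd
  have hcpos : 0 < c := pow_pos (norm_pos_iff.2 hvne) 2
  have hdpos : 0 < d := pow_pos (norm_pos_iff.2 hw) 2
  set u : E := ((c/d : ℝ) : ℂ) • (Q v) with hu
  have hwU : Q v ∈ Q.range := ⟨v, rfl⟩
  have hQu : Q u = u := by
    rw [hu, _root_.map_smul, fix_of_mem_range hQ hwU]
  have huv : ⟪u, v⟫_ℂ = 0 := by
    have h1 : ⟪Q v, v⟫_ℂ = 0 :=
      (Submodule.mem_orthogonal _ _).1 hv (Q v) hwU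
    rw [hu, inner_smul_left, h1, mul_zero]
  have hnormu : ‖u‖^2 = (c/d)^2 * d := by
    rw [hu, norm_smul, Complex.norm_real, Real.norm_eq_abs,
      abs_of_pos (div_pos hcpos hdpos), mul_pow, ← hd]
  have hx2 : ‖u + v‖ ^ 2 = (c/d)^2 * d + c := by
    rw [norm_sq_add_of_inner_zero huv, hnormu, ← hc]
  have hQx : Q (u + v) = ((c/d + 1 : ℝ) : ℂ) • (Q v) := by
    rw [_root_.map_add, hQu, hu]
    push_cast
    rw [add_smul, one_smul]
  have hQx2 : ‖Q (u + v)‖ ^ 2 = (c/d + 1)^2 * d := by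
    rw [hQx, norm_smul, Complex.norm_real, Real.norm_eq_abs,
      abs_of_pos (by positivity), mul_pow, ← hd]
  have hle : ‖Q (u + v)‖ ≤ ‖Q‖ * ‖u + v‖ := Q.le_opNorm _
  have hle2 : (c/d + 1)^2 * d ≤ ‖Q‖^2 * ((c/d)^2 * d + c) := by
    have h1 : ‖Q (u+v)‖^2 ≤ (‖Q‖ * ‖u+v‖)^2 := by
      nlinarith [norm_nonneg (Q (u+v)), norm_nonneg (u+v), norm_nonneg Q]
    rw [hQx2] at h1
    calc (c/d + 1)^2 * d ≤ (‖Q‖ * ‖u+v‖)^2 := h1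
    _ = ‖Q‖^2 * ‖u+v‖^2 := by ring
    _ = ‖Q‖^2 * ((c/d)^2 * d + c) := by rw [hx2]
  have expand : (c/d+1)^2 * d = (c+d)^2/d := by field_simp
  have expand2 : (c/d)^2*d + c = c*(c+d)/d := by field_simp
  rw [expand, expand2, ← mul_div_assoc] at hle2
  have h3 : (c+d)^2 ≤ ‖Q‖^2 * (c * (c+d)) := by
    have := (div_le_div_iff₀ hdpos hdpos).1 hle2
    nlinarith
  nlinarith [sq_nonneg (c+d)]

theorem key_identity {Q : E →L[ℂ] E} (hQ : Q ∘L Q = Q) (h0 : Q ≠ 0) :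
    ‖Q‖ ^ 2 = 1 + ‖Q - projCLM (Q.range)‖ ^ 2 := by
  set U := Q.range with hU
  set P := projCLM U with hP
  set C := ‖Q - P‖ with hC
  have hN : (1:ℝ) ≤ ‖Q‖ := one_le_norm_idem hQ h0
  have hQP : ∀ x, Q (P x) = P x := fun x => fix_of_mem_range hQ (projCLM_mem U x)
  -- C^2 ≤ ‖Q‖^2 - 1
  have hCle : C ^ 2 ≤ ‖Q‖ ^ 2 - 1 := by
    have hb : ∀ x : E, ‖(Q - P) x‖ ≤ Real.sqrt (‖Q‖^2 - 1) * ‖x‖ := by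
      intro x
      have hvmem : x - P x ∈ Uᗮ := sub_projCLM_mem U x
      have heq : (Q - P) x = Q (x - P x) := by
        simp only [ContinuousLinearMap.sub_apply, _root_.map_sub, hQP x]
      have hb1 : ‖Q (x - P x)‖^2 ≤ (‖Q‖^2 - 1) * ‖x - P x‖^2 :=
        pointwise_bound hQ h0 hvmem
      have hvle : ‖x - P x‖ ≤ ‖x‖ := by
        have hperp : ⟪P x, x - P x⟫_ℂ = 0 := by
          have := (Submodule.mem_orthogonal _ _).1 hvmem (P x) (projCLM_mem U x)
          exact this
        have hx : ‖x‖^2 = ‖P x‖^2 + ‖x - P x‖^2 := by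
          have := norm_sq_add_of_inner_zero hperp
          rw [add_sub_cancel] at this
          exact this
        nlinarith [norm_nonneg (P x), norm_nonneg (x - P x), norm_nonneg x]
      rw [heq]
      have h2 : ‖Q (x - P x)‖^2 ≤ (‖Q‖^2 - 1) * ‖x‖^2 := by
        have hQ1 : (0:ℝ) ≤ ‖Q‖^2 - 1 := by nlinarith
        have hsq : ‖x - P x‖^2 ≤ ‖x‖^2 := by
          nlinarith [norm_nonneg (x - P x), norm_nonneg x]
        nlinarith [mul_le_mul_of_nonneg_left hsq hQ1]
      have h3 : (Real.sqrt (‖Q‖^2-1) * ‖x‖)^2 = (‖Q‖^2-1)*‖x‖^2 := by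
        rw [mul_pow, Real.sq_sqrt (by nlinarith)]
      nlinarith [norm_nonneg (Q (x - P x)), Real.sqrt_nonneg (‖Q‖^2-1), norm_nonneg x,
        mul_nonneg (Real.sqrt_nonneg (‖Q‖^2-1)) (norm_nonneg x)]
    have := ContinuousLinearMap.opNorm_le_bound _ (by positivity) hb
    have h4 : C ≤ Real.sqrt (‖Q‖^2-1) := this
    nlinarith [Real.sq_sqrt (show (0:ℝ) ≤ ‖Q‖^2-1 by nlinarith), Real.sqrt_nonneg (‖Q‖^2-1),
      norm_nonneg (Q - P)]
  -- ‖Q‖^2 ≤ 1 + C^2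
  have hNle : ‖Q‖ ^ 2 ≤ 1 + C ^ 2 := by
    have hb : ∀ x : E, ‖Q x‖ ≤ Real.sqrt (1 + C^2) * ‖x‖ := by
      intro x
      have hvmem : x - P x ∈ Uᗮ := sub_projCLM_mem U x
      have hQx : Q x = P x + Q (x - P x) := by
        rw [_root_.map_sub, hQP x]; abel
      have hQv : ‖Q (x - P x)‖ ≤ C * ‖x - P x‖ := by
        have : (Q - P) (x - P x) = Q (x - P x) := by
          simp only [ContinuousLinearMap.sub_apply]
          rw [projCLM_eq_zero U hvmem, sub_zero]
        rw [← this]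
        exact (Q - P).le_opNorm _
      have hx : ‖x‖^2 = ‖P x‖^2 + ‖x - P x‖^2 := by
        have hperp : ⟪P x, x - P x⟫_ℂ = 0 :=
          (Submodule.mem_orthogonal _ _).1 hvmem (P x) (projCLM_mem U x)
        have := norm_sq_add_of_inner_zero hperp
        rw [add_sub_cancel] at this
        exact this
      have htr : ‖Q x‖ ≤ ‖P x‖ + C * ‖x - P x‖ := by
        rw [hQx]
        exact (norm_add_le _ _).trans (by gcongr)
      have hCpos : 0 ≤ C := norm_nonneg _
      have hsq : (‖P x‖ + C * ‖x - P x‖)^2 ≤ (1 + C^2) * ‖x‖^2 := by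
        rw [hx]
        nlinarith [sq_nonneg (C * ‖P x‖ - ‖x - P x‖), norm_nonneg (P x), norm_nonneg (x - P x)]
      have h5 : (Real.sqrt (1 + C^2) * ‖x‖)^2 = (1+C^2)*‖x‖^2 := by
        rw [mul_pow, Real.sq_sqrt (by positivity)]
      nlinarith [norm_nonneg (Q x), norm_nonneg (P x), norm_nonneg (x - P x),
        mul_nonneg (Real.sqrt_nonneg (1+C^2)) (norm_nonneg x),
        mul_nonneg hCpos (norm_nonneg (x - P x))]
    have h6 : ‖Q‖ ≤ Real.sqrt (1 + C^2) := ContinuousLinearMap.opNorm_le_bound _ (by positivity) hb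
    nlinarith [Real.sq_sqrt (show (0:ℝ) ≤ 1 + C^2 by positivity), Real.sqrt_nonneg (1+C^2),
      norm_nonneg Q]
  linarith

end Key

section Kato

variable {E : Type*} [NormedAddCommGroup E] [InnerProductSpace ℂ E] [FiniteDimensional ℂ E]

open ContinuousLinearMap

lemma range_adjoint_eq (A : E →L[ℂ] E) :
    (ContinuousLinearMap.adjoint A).range = (A.ker)ᗮ := by
  have h1 : ((ContinuousLinearMap.adjoint A).range)ᗮ = A.ker := by
    ext x
    constructor
    · intro hx
      have h2 : ∀ y, ⟪(ContinuousLinearMap.adjoint A) y, x⟫_ℂ = 0 := fun y =>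
        (Submodule.mem_orthogonal _ _).1 hx _ ⟨y, rfl⟩
      have h3 : ∀ y, ⟪y, A x⟫_ℂ = 0 := fun y => by
        rw [← ContinuousLinearMap.adjoint_inner_left]
        exact h2 y
      have := h3 (A x)
      rw [inner_self_eq_zero] at this
      exact this
    · intro hx
      refine (Submodule.mem_orthogonal _ _).2 ?_
      rintro u ⟨y, rfl⟩
      simp only [ContinuousLinearMap.coe_coe]; rw [ContinuousLinearMap.adjoint_inner_left]
      rw [LinearMap.mem_ker, ContinuousLinearMap.coe_coe] at hx
      rw [hx, inner_zero_right]
  rw [← h1, Submodule.orthogonal_orthogonal]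

lemma ker_eq_range_one_sub {Q : E →L[ℂ] E} (hQ : Q ∘L Q = Q) :
    Q.ker = (1 - Q).range := by
  ext x
  constructor
  · intro hx
    rw [LinearMap.mem_ker] at hx
    exact ⟨x, by simp [hx]⟩
  · rintro ⟨y, rfl⟩
    rw [LinearMap.mem_ker]
    have : Q (Q y) = Q y := fix_of_mem_range hQ ⟨y, rfl⟩
    simp [this]

lemma one_sub_idem {Q : E →L[ℂ] E} (hQ : Q ∘L Q = Q) :
    (1 - Q) ∘L (1 - Q) = 1 - Q := by
  ext x
  have : Q (Q x) = Q x := fix_of_mem_range hQ ⟨x, rfl⟩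
  simp [ContinuousLinearMap.comp_apply, _root_.map_sub, this]

lemma adjoint_idem {Q : E →L[ℂ] E} (hQ : Q ∘L Q = Q) :
    (ContinuousLinearMap.adjoint Q) ∘L (ContinuousLinearMap.adjoint Q)
      = ContinuousLinearMap.adjoint Q := by
  rw [← ContinuousLinearMap.adjoint_comp, hQ]

theorem kato_norm_eq {Q : E →L[ℂ] E} (hQ : Q ∘L Q = Q) (h0 : Q ≠ 0) (h1 : Q ≠ 1) :
    ‖Q‖ = ‖1 - Q‖ := by
  have hadj0 : ContinuousLinearMap.adjoint Q ≠ 0 := by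
    intro h
    apply h0
    have := congrArg ContinuousLinearMap.adjoint h
    rwa [ContinuousLinearMap.adjoint_adjoint, _root_.map_zero] at this
  have h1sub0 : (1 : E →L[ℂ] E) - Q ≠ 0 := by
    intro h
    exact h1 (by rwa [sub_eq_zero, eq_comm] at h)
  -- key applied to adjoint Q
  have hkey1 : ‖ContinuousLinearMap.adjoint Q‖ ^ 2 =
      1 + ‖ContinuousLinearMap.adjoint Q - projCLM ((ContinuousLinearMap.adjoint Q).range)‖ ^ 2 :=
    key_identity (adjoint_idem hQ) hadj0
  -- key applied to 1 - Q
  have hkey2 : ‖(1:E →L[ℂ] E) - Q‖ ^ 2 =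
      1 + ‖(1 - Q) - projCLM ((1 - Q).range)‖ ^ 2 :=
    key_identity (one_sub_idem hQ) h1sub0
  -- identify the two correction terms
  have hrange : (ContinuousLinearMap.adjoint Q).range = ((1 - Q).range)ᗮ := by
    rw [range_adjoint_eq, ker_eq_range_one_sub hQ]
  have hPeq : projCLM ((ContinuousLinearMap.adjoint Q).range)
      = 1 - projCLM ((1 - Q).range) := by
    rw [hrange, projCLM_orthogonal]
  set K := ((1:E →L[ℂ] E) - Q).range with hK
  have hadj1 : ContinuousLinearMap.adjoint (1 : E →L[ℂ] E) = 1 := by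
    rw [← ContinuousLinearMap.star_eq_adjoint, star_one]
  have hPsa : ContinuousLinearMap.adjoint (projCLM K) = projCLM K :=
    (projCLM_selfAdjoint K).adjoint_eq
  have hterm : ‖ContinuousLinearMap.adjoint Q - projCLM ((ContinuousLinearMap.adjoint Q).range)‖
      = ‖(1 - Q) - projCLM K‖ := by
    rw [hPeq]
    have heq : ContinuousLinearMap.adjoint Q - (1 - projCLM K)
        = -(ContinuousLinearMap.adjoint (((1:E →L[ℂ] E) - Q) - projCLM K)) := by
      rw [_root_.map_sub, _root_.map_sub, hadj1, hPsa]
      abel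
    rw [heq, norm_neg, LinearIsometryEquiv.norm_map ContinuousLinearMap.adjoint]
  have hnorms : ‖ContinuousLinearMap.adjoint Q‖ = ‖Q‖ :=
    LinearIsometryEquiv.norm_map ContinuousLinearMap.adjoint Q
  have hsq : ‖Q‖ ^ 2 = ‖(1:E →L[ℂ] E) - Q‖ ^ 2 := by
    rw [← hnorms, hkey1, hterm, hkey2]
  have := congrArg Real.sqrt hsq
  rwa [Real.sqrt_sq (norm_nonneg _), Real.sqrt_sq (norm_nonneg _)] at this

end Kato

section SelfAdj

variable {E : Type*} [NormedAddCommGroup E] [InnerProductSpace ℂ E] [FiniteDimensional ℂ E]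

theorem norm_eq_one_iff_selfadjoint {Q : E →L[ℂ] E} (hQ : Q ∘L Q = Q) (h0 : Q ≠ 0) :
    ‖Q‖ = 1 ↔ ContinuousLinearMap.adjoint Q = Q := by
  constructor
  · intro hn
    have hkey := key_identity hQ h0
    rw [hn] at hkey
    have hz : ‖Q - projCLM (Q.range)‖ = 0 := by
      nlinarith [norm_nonneg (Q - projCLM (Q.range))]
    have hQeq : Q = projCLM (Q.range) := by
      have := norm_eq_zero.1 hz
      rwa [sub_eq_zero] at this
    rw [hQeq, (projCLM_selfAdjoint _).adjoint_eq]
  · intro hsa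
    have hge : (1:ℝ) ≤ ‖Q‖ := one_le_norm_idem hQ h0
    have hle : ‖Q‖ ≤ 1 := by
      apply ContinuousLinearMap.opNorm_le_bound _ zero_le_one
      intro x
      rw [one_mul]
      have hinner : ⟪Q x, Q x⟫_ℂ = ⟪Q x, x⟫_ℂ := by
        have h1 := ContinuousLinearMap.adjoint_inner_left Q x (Q x)
        rw [hsa] at h1
        rw [fix_of_mem_range hQ (y := Q x) ⟨x, rfl⟩] at h1
        exact h1.symm
      have h3 : ‖Q x‖^2 = RCLike.re ⟪Q x, x⟫_ℂ := by
        rw [← hinner, ← @inner_self_eq_norm_sq ℂ]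
      have h4 : RCLike.re ⟪Q x, x⟫_ℂ ≤ ‖⟪Q x, x⟫_ℂ‖ := RCLike.re_le_norm _
      have h5 : ‖⟪Q x, x⟫_ℂ‖ ≤ ‖Q x‖ * ‖x‖ := norm_inner_le_norm _ _
      by_cases hqx : ‖Q x‖ = 0
      · rw [hqx]; exact norm_nonneg x
      · have hpos : 0 < ‖Q x‖ := lt_of_le_of_ne (norm_nonneg _) (Ne.symm hqx)
        nlinarith
    linarith

end SelfAdj

section Sup

variable {E : Type*} [NormedAddCommGroup E] [InnerProductSpace ℂ E] [FiniteDimensional ℂ E]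

lemma exists_norm_attained [Nontrivial E] (A : E →L[ℂ] E) :
    ∃ x : E, ‖x‖ = 1 ∧ ‖A x‖ = ‖A‖ := by
  obtain ⟨x1, hx1⟩ : ∃ x : E, ‖x‖ = 1 := exists_norm_eq E zero_le_one
  have hcs : IsCompact (Metric.sphere (0:E) 1) := isCompact_sphere _ _
  have hne : (Metric.sphere (0:E) 1).Nonempty := ⟨x1, by simp [hx1]⟩
  obtain ⟨x₀, hx₀s, hmax⟩ := hcs.exists_isMaxOn hne (A.continuous.norm.continuousOn)
  have hx₀ : ‖x₀‖ = 1 := by simpa using hx₀s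
  refine ⟨x₀, hx₀, le_antisymm (by simpa [hx₀] using A.le_opNorm x₀) ?_⟩
  apply ContinuousLinearMap.opNorm_le_bound _ (norm_nonneg _)
  intro x
  by_cases hx : x = 0
  · simp [hx]
  · have hnx : 0 < ‖x‖ := norm_pos_iff.2 hx
    set y : E := ((‖x‖⁻¹ : ℝ) : ℂ) • x with hy
    have hny : ‖y‖ = 1 := by
      rw [hy, norm_smul, Complex.norm_real, Real.norm_eq_abs, abs_of_pos (inv_pos.2 hnx)]
      field_simp
    have hmem : y ∈ Metric.sphere (0:E) 1 := by simp [hny]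
    have h1 : ‖A y‖ ≤ ‖A x₀‖ := hmax hmem
    have h2 : A y = ((‖x‖⁻¹ : ℝ) : ℂ) • A x := by rw [hy, _root_.map_smul]
    have h3 : ‖A y‖ = ‖x‖⁻¹ * ‖A x‖ := by
      rw [h2, norm_smul, Complex.norm_real, Real.norm_eq_abs, abs_of_pos (inv_pos.2 hnx)]
    rw [h3] at h1
    calc ‖A x‖ = ‖x‖ * (‖x‖⁻¹ * ‖A x‖) := by field_simp
    _ ≤ ‖x‖ * ‖A x₀‖ := by
        apply mul_le_mul_of_nonneg_left h1 (norm_nonneg x)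
    _ = ‖A x₀‖ * ‖x‖ := mul_comm _ _

lemma sSup_ratio_eq [Nontrivial E] (A : E →L[ℂ] E) :
    sSup {r : ℝ | ∃ x : E, x ≠ 0 ∧ r = ‖A x‖ / ‖x‖} = ‖A‖ := by
  apply IsGreatest.csSup_eq
  constructor
  · obtain ⟨x₀, hx₀, hAx₀⟩ := exists_norm_attained A
    refine ⟨x₀, ?_, ?_⟩
    · intro h; rw [h] at hx₀; simp at hx₀
    · rw [hx₀, hAx₀, div_one]
  · rintro r ⟨x, hx, rfl⟩
    rw [div_le_iff₀ (norm_pos_iff.2 hx)]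
    exact A.le_opNorm x

lemma sSup_perp_ratio {Q : E →L[ℂ] E} (hQ : Q ∘L Q = Q) (h0 : Q ≠ 0)
    (hT : Q.range ≠ ⊤) :
    sSup {r : ℝ | ∃ x : E, x ≠ 0 ∧ x ∈ (Q.range)ᗮ ∧ r = ‖Q x‖^2 / ‖x‖^2}
      = ‖Q - projCLM (Q.range)‖^2 := by
  have hnt : Nontrivial E := by
    obtain ⟨z, hz⟩ : ∃ z, Q z ≠ 0 := by
      by_contra h; push_neg at h; exact h0 (by ext x; simp [h x])
    exact ⟨⟨z, 0, fun h => hz (by rw [h, _root_.map_zero])⟩⟩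
  set U := Q.range with hU
  set D := Q - projCLM U with hD
  have hDx : ∀ x ∈ Uᗮ, Q x = D x := by
    intro x hx
    rw [hD]
    simp only [ContinuousLinearMap.sub_apply]
    rw [projCLM_eq_zero U hx, sub_zero]
  have hub : ∀ r ∈ {r : ℝ | ∃ x : E, x ≠ 0 ∧ x ∈ Uᗮ ∧ r = ‖Q x‖^2 / ‖x‖^2}, r ≤ ‖D‖^2 := by
    rintro r ⟨x, hx, hxU, rfl⟩
    rw [div_le_iff₀ (pow_pos (norm_pos_iff.2 hx) 2)]
    rw [hDx x hxU]
    nlinarith [D.le_opNorm x, norm_nonneg (D x), norm_nonneg x, norm_nonneg D]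
  -- Uᗮ has a nonzero element
  obtain ⟨x2, hx2U, hx2⟩ : ∃ x ∈ Uᗮ, x ≠ 0 := by
    rw [← Submodule.ne_bot_iff]
    intro h
    exact hT (by rwa [← Submodule.orthogonal_eq_bot_iff])
  apply IsGreatest.csSup_eq
  refine ⟨?_, hub⟩
  by_cases hDz : ‖D‖ = 0
  · refine ⟨x2, hx2, hx2U, ?_⟩
    have hD0 : D = 0 := norm_eq_zero.1 hDz
    have hQx2 : Q x2 = 0 := by rw [hDx x2 hx2U, hD0]; simp
    rw [hQx2, hDz]
    simp
  · obtain ⟨x₀, hx₀, hDx₀⟩ := exists_norm_attained D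
    set v : E := x₀ - projCLM U x₀ with hv
    have hvU : v ∈ Uᗮ := sub_projCLM_mem U x₀
    have hDv : D x₀ = Q v := by
      rw [hD, hv]
      simp only [ContinuousLinearMap.sub_apply]
      rw [_root_.map_sub, fix_of_mem_range hQ (projCLM_mem U x₀)]
    have hvne : v ≠ 0 := by
      intro h
      apply hDz
      rw [← hDx₀, hDv, h, _root_.map_zero, norm_zero]
    have hvle : ‖v‖ ≤ 1 := by
      have hperp : ⟪projCLM U x₀, v⟫_ℂ = 0 :=
        (Submodule.mem_orthogonal _ _).1 hvU _ (projCLM_mem U x₀)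
      have hpyth := norm_sq_add_of_inner_zero hperp
      rw [hv] at hpyth ⊢
      rw [add_sub_cancel] at hpyth
      nlinarith [norm_nonneg (projCLM U x₀), norm_nonneg (x₀ - projCLM U x₀), hx₀]
    have hQv : ‖Q v‖ = ‖D‖ := by rw [← hDv, hDx₀]
    refine ⟨v, hvne, hvU, ?_⟩
    have hle1 : ‖Q v‖^2 / ‖v‖^2 ≤ ‖D‖^2 := hub _ ⟨v, hvne, hvU, rfl⟩
    have hge1 : ‖D‖^2 ≤ ‖Q v‖^2 / ‖v‖^2 := by
      rw [hQv]
      rw [le_div_iff₀ (pow_pos (norm_pos_iff.2 hvne) 2)]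
      have hv2 : ‖v‖^2 ≤ 1 := by nlinarith [hvle, norm_nonneg v]
      nlinarith [hv2, sq_nonneg (‖D‖:ℝ)]
    linarith
end Sup

section MatrixLayer

noncomputable def msqrt {n : ℕ} {B : Matrix (Fin n) (Fin n) ℂ} (_hB : B.PosDef) : Matrix (Fin n) (Fin n) ℂ := CFC.sqrt B

open Matrix

noncomputable def emb {n : ℕ} (x : Fin n → ℂ) : EuclideanSpace ℂ (Fin n) :=
  (WithLp.equiv 2 (Fin n → ℂ)).symm x

variable {n : ℕ}

lemma emb_inj {a b : Fin n → ℂ} (h : emb a = emb b) : a = b :=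
  (WithLp.equiv 2 (Fin n → ℂ)).symm.injective h

lemma emb_surj (y : EuclideanSpace ℂ (Fin n)) : ∃ a, emb a = y :=
  ⟨WithLp.equiv 2 (Fin n → ℂ) y, by simp [emb]⟩

lemma emb_zero : emb (0 : Fin n → ℂ) = 0 := by simp [emb]

lemma emb_ne_zero {a : Fin n → ℂ} (ha : a ≠ 0) : emb a ≠ 0 := by
  intro h
  exact ha (emb_inj (h.trans emb_zero.symm))

lemma clm_apply_emb (A : Matrix (Fin n) (Fin n) ℂ) (x : Fin n → ℂ) :
    Matrix.toEuclideanCLM (𝕜 := ℂ) A (emb x) = emb (A.mulVec x) := rfl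

lemma inner_emb (a b : Fin n → ℂ) : ⟪emb a, emb b⟫_ℂ = star a ⬝ᵥ b := by
  simp [emb, dotProduct, PiLp.inner_apply, mul_comm]

lemma norm_emb (a : Fin n → ℂ) : ‖emb a‖ = Real.sqrt ((star a ⬝ᵥ a).re) := by
  have h : RCLike.re ⟪emb a, emb a⟫_ℂ = ‖emb a‖ ^ 2 := @inner_self_eq_norm_sq ℂ _ _ _ _ (emb a)
  rw [← Real.sqrt_sq (norm_nonneg (emb a)), ← h, inner_emb]
  rfl

variable {B Pr : Matrix (Fin n) (Fin n) ℂ}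

section WithB

variable (hB : B.PosDef)

lemma sqrt_herm : (msqrt hB)ᴴ = msqrt hB :=
  (Matrix.nonneg_iff_posSemidef.1 (CFC.sqrt_nonneg B)).isHermitian

lemma sqrt_mul_sqrt : msqrt hB * msqrt hB = B :=
  CFC.sqrt_mul_sqrt_self B (Matrix.nonneg_iff_posSemidef.2 hB.posSemidef)

lemma sqrt_det_isUnit : IsUnit (msqrt hB).det := by
  have h1 : (msqrt hB).det * (msqrt hB).det = B.det := by
    rw [← Matrix.det_mul, sqrt_mul_sqrt hB]
  have h2 : B.det ≠ 0 := by
    have := hB.det_pos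
    intro h
    rw [h] at this
    exact lt_irrefl _ this
  have h3 : (msqrt hB).det ≠ 0 := by
    intro h
    rw [h, zero_mul] at h1
    exact h2 h1.symm
  exact isUnit_iff_ne_zero.2 h3

lemma sqrt_inv_mul : (msqrt hB)⁻¹ * msqrt hB = 1 :=
  Matrix.nonsing_inv_mul _ (sqrt_det_isUnit hB)

lemma sqrt_mul_inv : msqrt hB * (msqrt hB)⁻¹ = 1 :=
  Matrix.mul_nonsing_inv _ (sqrt_det_isUnit hB)

lemma dot_sqrt (a b : Fin n → ℂ) :
    star ((msqrt hB).mulVec a) ⬝ᵥ ((msqrt hB).mulVec b)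
      = star a ⬝ᵥ B.mulVec b := by
  rw [Matrix.star_mulVec, ← Matrix.dotProduct_mulVec, sqrt_herm hB,
    Matrix.mulVec_mulVec, sqrt_mul_sqrt hB]

lemma bnormV_eq (x : Fin n → ℂ) :
    bnormV B x = ‖emb ((msqrt hB).mulVec x)‖ := by
  rw [norm_emb, dot_sqrt hB, bnormV]

lemma sqrt_mulVec_ne_zero {x : Fin n → ℂ} (hx : x ≠ 0) :
    (msqrt hB).mulVec x ≠ 0 := by
  intro h
  apply hx
  have := congrArg (fun v => (msqrt hB)⁻¹.mulVec v) h
  simpa [Matrix.mulVec_mulVec, sqrt_inv_mul hB] using this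

lemma bnormM_eq [Nontrivial (EuclideanSpace ℂ (Fin n))] (C : Matrix (Fin n) (Fin n) ℂ) :
    bnormM B C = ‖Matrix.toEuclideanCLM (𝕜 := ℂ)
      (msqrt hB * C * (msqrt hB)⁻¹)‖ := by
  set S := msqrt hB with hS
  set A := Matrix.toEuclideanCLM (𝕜 := ℂ) (S * C * S⁻¹) with hA
  have hSCS : (S * C * S⁻¹) * S = S * C := by
    rw [Matrix.mul_assoc (S*C), sqrt_inv_mul hB, Matrix.mul_one]
  have hact : ∀ x : Fin n → ℂ, A (emb (S.mulVec x)) = emb (S.mulVec (C.mulVec x)) := by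
    intro x
    rw [hA, clm_apply_emb, Matrix.mulVec_mulVec, hSCS, ← Matrix.mulVec_mulVec]
  rw [bnormM, ← sSup_ratio_eq A]
  congr 1
  ext r
  constructor
  · rintro ⟨x, hx, rfl⟩
    refine ⟨emb (S.mulVec x), emb_ne_zero (sqrt_mulVec_ne_zero hB hx), ?_⟩
    rw [hact x, bnormV_eq hB, bnormV_eq hB, ← hS]
  · rintro ⟨y, hy, rfl⟩
    obtain ⟨a, rfl⟩ := emb_surj y
    set x := S⁻¹.mulVec a with hx
    have hSx : S.mulVec x = a := by
      rw [hx, Matrix.mulVec_mulVec, sqrt_mul_inv hB, Matrix.one_mulVec]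
    have hxne : x ≠ 0 := by
      intro h
      apply hy
      rw [← hSx, h, Matrix.mulVec_zero, emb_zero]
    refine ⟨x, hxne, ?_⟩
    rw [bnormV_eq hB, bnormV_eq hB, ← hS, ← hact x, hSx]

end WithB

end MatrixLayer

section MatrixLayer2

open Matrix

variable {n : ℕ} {B Pr : Matrix (Fin n) (Fin n) ℂ}

variable (hB : B.PosDef)

lemma conj_cancel (M : Matrix (Fin n) (Fin n) ℂ) : (msqrt hB)⁻¹ * (msqrt hB * M * (msqrt hB)⁻¹) * msqrt hB = M := by
  calc (msqrt hB)⁻¹ * (msqrt hB * M * (msqrt hB)⁻¹) * msqrt hB = ((msqrt hB)⁻¹ * msqrt hB) * (M * ((msqrt hB)⁻¹ * msqrt hB)) := by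
        simp only [Matrix.mul_assoc]
  _ = M := by rw [sqrt_inv_mul hB, Matrix.one_mul, Matrix.mul_one]

lemma conj_cancel' (M : Matrix (Fin n) (Fin n) ℂ) : msqrt hB * ((msqrt hB)⁻¹ * M * msqrt hB) * (msqrt hB)⁻¹ = M := by
  calc msqrt hB * ((msqrt hB)⁻¹ * M * msqrt hB) * (msqrt hB)⁻¹ = (msqrt hB * (msqrt hB)⁻¹) * (M * (msqrt hB * (msqrt hB)⁻¹)) := by
        simp only [Matrix.mul_assoc]
  _ = M := by rw [sqrt_mul_inv hB, Matrix.one_mul, Matrix.mul_one]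

lemma QmIdem (hproj : Pr * Pr = Pr) : (msqrt hB * Pr * (msqrt hB)⁻¹) * (msqrt hB * Pr * (msqrt hB)⁻¹) = (msqrt hB * Pr * (msqrt hB)⁻¹) := by
  calc (msqrt hB * Pr * (msqrt hB)⁻¹) * (msqrt hB * Pr * (msqrt hB)⁻¹) = msqrt hB * (Pr * (((msqrt hB)⁻¹ * msqrt hB) * (Pr * (msqrt hB)⁻¹))) := by simp only [Matrix.mul_assoc]
  _ = msqrt hB * (Pr * (Pr * (msqrt hB)⁻¹)) := by rw [sqrt_inv_mul hB, Matrix.one_mul]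
  _ = msqrt hB * (Pr * Pr) * (msqrt hB)⁻¹ := by simp only [Matrix.mul_assoc]
  _ = (msqrt hB * Pr * (msqrt hB)⁻¹) := by rw [hproj]

lemma PrEqConj : Pr = (msqrt hB)⁻¹ * ((msqrt hB * Pr * (msqrt hB)⁻¹)) * msqrt hB := (conj_cancel hB Pr).symm

lemma QmNeZero (h0 : Pr ≠ 0) : (msqrt hB * Pr * (msqrt hB)⁻¹) ≠ 0 := by
  intro h
  apply h0
  have hc := conj_cancel hB Pr
  rw [h, Matrix.mul_zero, Matrix.zero_mul] at hc
  exact hc.symm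

lemma QmNeOne (hI : Pr ≠ 1) : (msqrt hB * Pr * (msqrt hB)⁻¹) ≠ 1 := by
  intro h
  apply hI
  have hc := conj_cancel hB Pr
  rw [h, Matrix.mul_one, sqrt_inv_mul hB] at hc
  exact hc.symm

lemma QIdem (hproj : Pr * Pr = Pr) :
    Matrix.toEuclideanCLM (𝕜 := ℂ) ((msqrt hB * Pr * (msqrt hB)⁻¹)) ∘L Matrix.toEuclideanCLM (𝕜 := ℂ) ((msqrt hB * Pr * (msqrt hB)⁻¹))
      = Matrix.toEuclideanCLM (𝕜 := ℂ) ((msqrt hB * Pr * (msqrt hB)⁻¹)) := by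
  rw [← ContinuousLinearMap.mul_def, ← _root_.map_mul, QmIdem hB hproj]

lemma QNeZero (h0 : Pr ≠ 0) : Matrix.toEuclideanCLM (𝕜 := ℂ) ((msqrt hB * Pr * (msqrt hB)⁻¹)) ≠ 0 := by
  intro h
  apply QmNeZero hB h0
  exact (Matrix.toEuclideanCLM (𝕜 := ℂ) (n := Fin n)).injective (h.trans (_root_.map_zero _).symm)

lemma QNeOne (hI : Pr ≠ 1) : Matrix.toEuclideanCLM (𝕜 := ℂ) ((msqrt hB * Pr * (msqrt hB)⁻¹)) ≠ 1 := by
  intro h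
  apply QmNeOne hB hI
  exact (Matrix.toEuclideanCLM (𝕜 := ℂ) (n := Fin n)).injective (h.trans (_root_.map_one _).symm)

lemma QRangeNeTop (hproj : Pr * Pr = Pr) (hI : Pr ≠ 1) :
    (Matrix.toEuclideanCLM (𝕜 := ℂ) ((msqrt hB * Pr * (msqrt hB)⁻¹))).range ≠ ⊤ := by
  intro h
  apply QNeOne hB hI
  ext x
  have hx : x ∈ (Matrix.toEuclideanCLM (𝕜 := ℂ) ((msqrt hB * Pr * (msqrt hB)⁻¹))).range := by rw [h]; trivial
  rw [fix_of_mem_range (QIdem hB hproj) hx]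
  rfl

lemma QAct (C : Matrix (Fin n) (Fin n) ℂ) (x : Fin n → ℂ) :
    Matrix.toEuclideanCLM (𝕜 := ℂ) (msqrt hB * C * (msqrt hB)⁻¹) (emb ((msqrt hB).mulVec x))
      = emb ((msqrt hB).mulVec (C.mulVec x)) := by
  rw [clm_apply_emb, Matrix.mulVec_mulVec, Matrix.mul_assoc (msqrt hB * C), sqrt_inv_mul hB,
    Matrix.mul_one, ← Matrix.mulVec_mulVec]

lemma orthIff (x : Fin n → ℂ) :
    (∀ y : Fin n → ℂ, star (Pr.mulVec y) ⬝ᵥ B.mulVec x = 0) ↔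
      emb ((msqrt hB).mulVec x) ∈ ((Matrix.toEuclideanCLM (𝕜 := ℂ) ((msqrt hB * Pr * (msqrt hB)⁻¹))).range)ᗮ := by
  constructor
  · intro h
    apply (Submodule.mem_orthogonal _ _).2
    rintro u ⟨z, rfl⟩
    obtain ⟨a, rfl⟩ := emb_surj z
    have ha : a = (msqrt hB).mulVec ((msqrt hB)⁻¹.mulVec a) := by
      rw [Matrix.mulVec_mulVec, sqrt_mul_inv hB, Matrix.one_mulVec]
    rw [ha, ContinuousLinearMap.coe_coe, QAct hB Pr, inner_emb, dot_sqrt hB]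
    exact h _
  · intro hmem y
    have h1 := (Submodule.mem_orthogonal _ _).1 hmem
      (Matrix.toEuclideanCLM (𝕜 := ℂ) ((msqrt hB * Pr * (msqrt hB)⁻¹)) (emb ((msqrt hB).mulVec y))) ⟨emb ((msqrt hB).mulVec y), rfl⟩
    rw [QAct hB Pr, inner_emb, dot_sqrt hB] at h1
    exact h1

lemma setEq :
    {r : ℝ | ∃ x : Fin n → ℂ, x ≠ 0 ∧
        (∀ y : Fin n → ℂ, star (Pr.mulVec y) ⬝ᵥ B.mulVec x = 0) ∧
        r = (bnormV B (Pr.mulVec x)) ^ 2 / (bnormV B x) ^ 2}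
      = {r : ℝ | ∃ w : EuclideanSpace ℂ (Fin n), w ≠ 0 ∧
          w ∈ ((Matrix.toEuclideanCLM (𝕜 := ℂ) ((msqrt hB * Pr * (msqrt hB)⁻¹))).range)ᗮ ∧
          r = ‖Matrix.toEuclideanCLM (𝕜 := ℂ) ((msqrt hB * Pr * (msqrt hB)⁻¹)) w‖^2 / ‖w‖^2} := by
  ext r
  constructor
  · rintro ⟨x, hx, hperp, rfl⟩
    refine ⟨emb ((msqrt hB).mulVec x), emb_ne_zero (sqrt_mulVec_ne_zero hB hx),
      (orthIff hB x).1 hperp, ?_⟩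
    rw [QAct hB Pr, bnormV_eq hB, bnormV_eq hB]
  · rintro ⟨w, hw, hmem, rfl⟩
    obtain ⟨a, rfl⟩ := emb_surj w
    have ha : (msqrt hB).mulVec ((msqrt hB)⁻¹.mulVec a) = a := by
      rw [Matrix.mulVec_mulVec, sqrt_mul_inv hB, Matrix.one_mulVec]
    have hxne : (msqrt hB)⁻¹.mulVec a ≠ 0 := by
      intro h
      apply hw
      rw [← ha, h, Matrix.mulVec_zero, emb_zero]
    refine ⟨(msqrt hB)⁻¹.mulVec a, hxne, ?_, ?_⟩
    · rw [orthIff hB, ha]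
      exact hmem
    · rw [bnormV_eq hB, bnormV_eq hB, ha, ← QAct hB Pr, ha]

lemma hermIff : ((msqrt hB * Pr * (msqrt hB)⁻¹))ᴴ = (msqrt hB * Pr * (msqrt hB)⁻¹) ↔ Pr = B⁻¹ * Prᴴ * B := by
  have hQmH : ((msqrt hB * Pr * (msqrt hB)⁻¹))ᴴ = (msqrt hB)⁻¹ * Prᴴ * msqrt hB := by
    rw [Matrix.conjTranspose_mul, Matrix.conjTranspose_mul, Matrix.conjTranspose_nonsing_inv,
      sqrt_herm hB, Matrix.mul_assoc]
  have hBinv : B⁻¹ = (msqrt hB)⁻¹ * (msqrt hB)⁻¹ := by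
    have h := Matrix.mul_inv_rev (msqrt hB) (msqrt hB)
    rw [sqrt_mul_sqrt hB] at h
    exact h
  have hcompute : B⁻¹ * Prᴴ * B = (msqrt hB)⁻¹ * ((msqrt hB)⁻¹ * Prᴴ * msqrt hB) * msqrt hB := by
    refine Eq.symm ?_
    calc (msqrt hB)⁻¹ * ((msqrt hB)⁻¹ * Prᴴ * msqrt hB) * msqrt hB = ((msqrt hB)⁻¹ * (msqrt hB)⁻¹) * Prᴴ * (msqrt hB * msqrt hB) := by
          simp only [Matrix.mul_assoc]
    _ = B⁻¹ * Prᴴ * B := by rw [sqrt_mul_sqrt hB, ← hBinv]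
  constructor
  · intro h
    rw [hQmH] at h
    rw [hcompute, h, conj_cancel hB]
  · intro h
    rw [hQmH]
    conv_rhs => rw [h, hcompute]
    rw [conj_cancel' hB]

end MatrixLayer2

theorem stmt1 {n : ℕ} (B Pr : Matrix (Fin n) (Fin n) ℂ)
    (hB : B.PosDef) (hproj : Pr * Pr = Pr) (h0 : Pr ≠ 0) (hI : Pr ≠ 1) :
    bnormM B Pr = bnormM B (1 - Pr) ∧
    (bnormM B Pr) ^ 2 = 1 + sSup {r : ℝ | ∃ x : Fin n → ℂ, x ≠ 0 ∧
        (∀ y : Fin n → ℂ, star (Pr.mulVec y) ⬝ᵥ B.mulVec x = 0) ∧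
        r = (bnormV B (Pr.mulVec x)) ^ 2 / (bnormV B x) ^ 2} ∧
    (bnormM B Pr = 1 ↔ Pr = B⁻¹ * Prᴴ * B) := by
  rcases Nat.eq_zero_or_pos n with hn | hn
  · subst hn
    exact absurd (by ext i j; exact i.elim0 : Pr = 0) h0
  haveI : Nontrivial (EuclideanSpace ℂ (Fin n)) := by
    refine ⟨⟨emb (fun _ => 1), 0, emb_ne_zero ?_⟩⟩
    intro h
    have h2 := congrFun h ⟨0, hn⟩
    simp at h2
  have hQi := QIdem hB hproj
  have hQ0 := QNeZero hB h0
  have hQ1 := QNeOne hB hI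
  have hRT := QRangeNeTop hB hproj hI
  refine ⟨?_, ?_, ?_⟩
  · rw [bnormM_eq hB Pr, bnormM_eq hB (1 - Pr)]
    have hmat : msqrt hB * (1 - Pr) * (msqrt hB)⁻¹
        = 1 - msqrt hB * Pr * (msqrt hB)⁻¹ := by
      rw [Matrix.mul_sub, Matrix.mul_one, Matrix.sub_mul, sqrt_mul_inv hB]
    rw [hmat, _root_.map_sub, _root_.map_one]
    exact kato_norm_eq hQi hQ0 hQ1
  · rw [bnormM_eq hB Pr, key_identity hQi hQ0, setEq hB, sSup_perp_ratio hQi hQ0 hRT]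
  · rw [bnormM_eq hB Pr, norm_eq_one_iff_selfadjoint hQi hQ0,
      ← ContinuousLinearMap.star_eq_adjoint, ← map_star, Matrix.star_eq_conjTranspose]
    constructor
    · intro h
      exact (hermIff hB).1 ((Matrix.toEuclideanCLM (𝕜 := ℂ) (n := Fin n)).injective h)
    · intro h
      exact congrArg _ ((hermIff hB).2 h)
end

section
/- A matrix A ∈ ℂ^{n×n} is B-normal (AA⁺ = A⁺A) if and only if A is B-unitarily diagonalizable, i.e. there exist a B-unitary matrix U (meaning UᴴBU = I) and a diagonal matrix D with A = U D U⁻¹. -/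
open Matrix Polynomial
open scoped ComplexOrder

section Aux
open Matrix

lemma isDiag_blockDiagonal' {o : Type*} {m' : o → Type*} [DecidableEq o]
    (M : ∀ i, Matrix (m' i) (m' i) ℂ) (h : ∀ i, (M i).IsDiag) : (blockDiagonal' M).IsDiag := by
  rintro ⟨b, i⟩ ⟨c, j⟩ hij
  rcases eq_or_ne b c with rfl | hbc
  · rw [blockDiagonal'_apply_eq]
    exact h b (fun hh => hij (by rw [hh]))
  · exact blockDiagonal'_apply_ne _ _ _ hbc

lemma isDiag_submatrix_equiv {m o : Type*} (M : Matrix m m ℂ) (e : o ≃ m) (h : M.IsDiag) :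
    (M.submatrix e e).IsDiag := fun _ _ hij => h (fun hh => hij (e.injective hh))

lemma blockDiagHerm {m : Type*} [Fintype m] [DecidableEq m] (d : m → ℝ) (K : Matrix m m ℂ)
    (hK : K.IsHermitian) (hblk : ∀ i j, d i ≠ d j → K i j = 0) :
    ∃ W : Matrix m m ℂ, Wᴴ * W = 1 ∧ (Wᴴ * K * W).IsDiag ∧ ∀ i j, d i ≠ d j → W i j = 0 := by
  classical
  set f : m → Set.range d := fun i => ⟨d i, Set.mem_range_self i⟩ with hf
  let e : (Σ b : Set.range d, {a // f a = b}) ≃ m := Equiv.sigmaFiberEquiv f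
  -- blocks of K
  set Kb : ∀ b : Set.range d, Matrix {a // f a = b} {a // f a = b} ℂ :=
    fun b => fun i j => K i.1 j.1 with hKb
  have hKsub : K.submatrix e e = blockDiagonal' Kb := by
    ext ⟨b, i⟩ ⟨c, j⟩
    by_cases hbc : b = c
    · subst hbc
      simp [blockDiagonal'_apply_eq, e, Equiv.sigmaFiberEquiv, Kb]
      exact (blockDiagonal'_apply_eq Kb b i j).symm
    · rw [blockDiagonal'_apply_ne _ _ _ hbc]
      have : d i.1 ≠ d j.1 := by
        intro hd
        apply hbc
        have hi : f i.1 = b := i.2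
        have hj : f j.1 = c := j.2
        rw [← hi, ← hj]
        simp [hf, hd]
      simpa [e, Equiv.sigmaFiberEquiv] using hblk _ _ this
  have hKbH : ∀ b, (Kb b).IsHermitian := by
    intro b
    ext i j
    have := congrFun (congrFun hK i.1) j.1
    exact this
  set Vb : ∀ b : Set.range d, Matrix {a // f a = b} {a // f a = b} ℂ :=
    fun b => ((hKbH b).eigenvectorUnitary : Matrix _ _ ℂ) with hVb
  set Wσ := blockDiagonal' Vb with hWσ
  refine ⟨Wσ.submatrix e.symm e.symm, ?_, ?_, ?_⟩
  · rw [conjTranspose_submatrix, submatrix_mul_equiv, hWσ, blockDiagonal'_conjTranspose,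
      ← blockDiagonal'_mul]
    have : (fun b => (Vb b)ᴴ * Vb b)
        = (1 : ∀ b : Set.range d, Matrix {a // f a = b} {a // f a = b} ℂ) := by
      funext b
      exact mem_unitaryGroup_iff'.mp ((hKbH b).eigenvectorUnitary).2
    rw [this, blockDiagonal'_one, submatrix_one_equiv]
  · have hW : (Wσ.submatrix ⇑e.symm ⇑e.symm)ᴴ * K * Wσ.submatrix ⇑e.symm ⇑e.symm
        = (Wσᴴ * K.submatrix ⇑e ⇑e * Wσ).submatrix ⇑e.symm ⇑e.symm := by
      rw [conjTranspose_submatrix]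
      have hK' : K = (K.submatrix e e).submatrix e.symm e.symm := by
        simp [submatrix_submatrix]
      rw [hK', submatrix_mul_equiv, submatrix_mul_equiv]
      simp [submatrix_submatrix]
    rw [hW, hKsub, hWσ, blockDiagonal'_conjTranspose, ← blockDiagonal'_mul,
      ← blockDiagonal'_mul]
    apply isDiag_submatrix_equiv
    apply isDiag_blockDiagonal'
    intro b
    have hd : star ((hKbH b).eigenvectorUnitary : Matrix _ _ ℂ) * Kb b
        * ((hKbH b).eigenvectorUnitary : Matrix _ _ ℂ) = diagonal (RCLike.ofReal ∘ (hKbH b).eigenvalues) := by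
      simpa [Unitary.conjStarAlgAut_apply] using (hKbH b).conjStarAlgAut_star_eigenvectorUnitary
    rw [show star ((hKbH b).eigenvectorUnitary : Matrix _ _ ℂ) = (Vb b)ᴴ from rfl] at hd
    rw [show ((hKbH b).eigenvectorUnitary : Matrix _ _ ℂ) = Vb b from rfl] at hd
    rw [hd]
    exact isDiag_diagonal _
  · intro i j hdij
    have hbc : (e.symm i).1 ≠ (e.symm j).1 := by
      intro h
      apply hdij
      have h1 : (e.symm i).1 = f i := rfl
      have h2 : (e.symm j).1 = f j := rfl
      have : f i = f j := by rw [← h1, ← h2, h]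
      exact congrArg Subtype.val this
    rw [submatrix_apply, hWσ, blockDiagonal'_apply_ne _ _ _ hbc]

lemma normal_spectral {m : Type*} [Fintype m] [DecidableEq m] (M : Matrix m m ℂ)
    (h : M * Mᴴ = Mᴴ * M) :
    ∃ V D : Matrix m m ℂ, Vᴴ * V = 1 ∧ D.IsDiag ∧ M = V * D * Vᴴ := by
  classical
  set H : Matrix m m ℂ := (1/2 : ℂ) • (M + Mᴴ) with hHdef
  have hH : H.IsHermitian := by
    show ((1/2 : ℂ) • (M + Mᴴ)).IsHermitian
    rw [IsHermitian, conjTranspose_smul, conjTranspose_add, conjTranspose_conjTranspose]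
    rw [show star (1/2 : ℂ) = (1/2 : ℂ) by norm_num, add_comm]
  set V₁ : Matrix m m ℂ := (hH.eigenvectorUnitary : Matrix m m ℂ) with hV₁
  have hV₁l : V₁ᴴ * V₁ = 1 := mem_unitaryGroup_iff'.mp hH.eigenvectorUnitary.2
  have hV₁r : V₁ * V₁ᴴ = 1 := mem_unitaryGroup_iff.mp hH.eigenvectorUnitary.2
  set d : m → ℝ := hH.eigenvalues with hd
  set E : Matrix m m ℂ := diagonal (fun i => (d i : ℂ)) with hE
  have hHE : V₁ᴴ * H * V₁ = E := by
    have : star (hH.eigenvectorUnitary : Matrix m m ℂ) * H * (hH.eigenvectorUnitary : Matrix m m ℂ)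
        = diagonal (RCLike.ofReal ∘ hH.eigenvalues) := by
      simpa [Unitary.conjStarAlgAut_apply] using hH.conjStarAlgAut_star_eigenvectorUnitary
    rw [show star (hH.eigenvectorUnitary : Matrix m m ℂ) = V₁ᴴ from rfl] at this
    exact this
  set M₁ : Matrix m m ℂ := V₁ᴴ * M * V₁ with hM₁
  have hM₁H : M₁ᴴ = V₁ᴴ * Mᴴ * V₁ := by
    simp [hM₁, conjTranspose_mul, Matrix.mul_assoc]
  have hsum : M₁ + M₁ᴴ = (2:ℂ) • E := by
    rw [hM₁H, hM₁, ← hHE, hHdef, Matrix.mul_smul, Matrix.smul_mul, smul_smul,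
      show ((2:ℂ) * (1/2)) = 1 by norm_num, one_smul, Matrix.mul_add, Matrix.add_mul]
  set K : Matrix m m ℂ := (-Complex.I) • (M₁ - E) with hK
  have hEH : Eᴴ = E := by
    rw [hE, diagonal_conjTranspose]
    exact congrArg diagonal (funext fun i => Complex.conj_ofReal (d i))
  have hKH : K.IsHermitian := by
    have hM₁conj : M₁ᴴ = (2:ℂ) • E - M₁ := by rw [← hsum]; abel
    rw [IsHermitian, hK, conjTranspose_smul, conjTranspose_sub, hEH, hM₁conj,
      show star (-Complex.I) = Complex.I by simp]
    module
  -- M₁ commutes with E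
  have hnormal₁ : M₁ * M₁ᴴ = M₁ᴴ * M₁ := by
    rw [hM₁H, hM₁]
    calc V₁ᴴ * M * V₁ * (V₁ᴴ * Mᴴ * V₁)
        = V₁ᴴ * (M * (V₁ * V₁ᴴ) * Mᴴ) * V₁ := by
          simp only [Matrix.mul_assoc]
      _ = V₁ᴴ * (M * Mᴴ) * V₁ := by rw [hV₁r]; simp only [Matrix.mul_one, Matrix.mul_assoc]
      _ = V₁ᴴ * (Mᴴ * M) * V₁ := by rw [h]
      _ = V₁ᴴ * (Mᴴ * (V₁ * V₁ᴴ) * M) * V₁ := by rw [hV₁r]; simp only [Matrix.mul_one, Matrix.mul_assoc]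
      _ = V₁ᴴ * Mᴴ * V₁ * (V₁ᴴ * M * V₁) := by simp only [Matrix.mul_assoc]
  have hME : M₁ * E = E * M₁ := by
    have key : M₁ * (M₁ + M₁ᴴ) = (M₁ + M₁ᴴ) * M₁ := by
      rw [Matrix.mul_add, Matrix.add_mul, hnormal₁]
    rw [hsum] at key
    rw [Matrix.mul_smul, Matrix.smul_mul] at key
    have := smul_right_injective (Matrix m m ℂ) (two_ne_zero (α := ℂ)) key
    exact this
  have hKE : ∀ i j, d i ≠ d j → K i j = 0 := by
    intro i j hij
    have hcomm : K * E = E * K := by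
      rw [hK, Matrix.smul_mul, Matrix.mul_smul, Matrix.sub_mul, Matrix.mul_sub, hME]
    have := congrFun (congrFun hcomm i) j
    rw [hE] at this
    rw [mul_diagonal, diagonal_mul] at this
    have hne : (d j : ℂ) ≠ (d i : ℂ) := by
      exact_mod_cast fun hc => hij ((Complex.ofReal_inj.mp hc).symm)
    -- K i j * d j = d i * K i j
    rcases eq_or_ne (K i j) 0 with h0 | h0
    · exact h0
    · rw [mul_comm ((d i : ℂ))] at this
      exact absurd (mul_left_cancel₀ h0 this) hne
  obtain ⟨W, hWl, hWdiag, hWblk⟩ := blockDiagHerm d K hKH hKE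
  have hWr : W * Wᴴ = 1 := mul_eq_one_comm.mp hWl
  have hEW : E * W = W * E := by
    ext i j
    rw [hE, diagonal_mul, mul_diagonal]
    rcases eq_or_ne (d i) (d j) with hdd | hdd
    · rw [hdd, mul_comm]
    · rw [hWblk i j hdd, mul_zero, zero_mul]
  refine ⟨V₁ * W, Wᴴ * M₁ * W, ?_, ?_, ?_⟩
  · rw [conjTranspose_mul]
    calc Wᴴ * V₁ᴴ * (V₁ * W) = Wᴴ * (V₁ᴴ * V₁) * W := by simp only [Matrix.mul_assoc]
      _ = 1 := by rw [hV₁l, Matrix.mul_one, hWl]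
  · have hM₁eq : M₁ = E + Complex.I • K := by
      rw [hK, smul_smul]
      rw [show Complex.I * (-Complex.I) = 1 by simp, one_smul]
      abel
    rw [hM₁eq, Matrix.mul_add, Matrix.add_mul]
    apply Matrix.IsDiag.add
    · have : Wᴴ * E * W = E := by
        calc Wᴴ * E * W = Wᴴ * (E * W) := by rw [Matrix.mul_assoc]
          _ = Wᴴ * (W * E) := by rw [hEW]
          _ = (Wᴴ * W) * E := by rw [Matrix.mul_assoc]
          _ = E := by rw [hWl, Matrix.one_mul]
      rw [this, hE]
      exact isDiag_diagonal _
    · rw [Matrix.mul_smul, Matrix.smul_mul]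
      exact Matrix.IsDiag.smul _ hWdiag
  · have : M = V₁ * M₁ * V₁ᴴ := by
      rw [hM₁]
      calc M = 1 * M * 1 := by rw [Matrix.one_mul, Matrix.mul_one]
        _ = (V₁ * V₁ᴴ) * M * (V₁ * V₁ᴴ) := by rw [hV₁r]
        _ = V₁ * (V₁ᴴ * M * V₁) * V₁ᴴ := by simp only [Matrix.mul_assoc]
    rw [this]
    rw [conjTranspose_mul]
    calc V₁ * M₁ * V₁ᴴ
        = V₁ * (1 * M₁ * 1) * V₁ᴴ := by rw [Matrix.one_mul, Matrix.mul_one]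
      _ = V₁ * ((W * Wᴴ) * M₁ * (W * Wᴴ)) * V₁ᴴ := by rw [hWr]
      _ = V₁ * W * (Wᴴ * M₁ * W) * (Wᴴ * V₁ᴴ) := by simp only [Matrix.mul_assoc]

end Aux

open Matrix in

open scoped MatrixOrder in
set_option maxHeartbeats 1000000 in
theorem stmt3 {n : ℕ} (B A : Matrix (Fin n) (Fin n) ℂ) (hB : B.PosDef) :
    (A * badj B A = badj B A * A ↔
      ∃ U D : Matrix (Fin n) (Fin n) ℂ, Uᴴ * B * U = 1 ∧ D.IsDiag ∧ A = U * D * U⁻¹) := by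
  classical
  have hBdet : IsUnit B.det := (Matrix.isUnit_iff_isUnit_det B).mp hB.isUnit
  set C : Matrix (Fin n) (Fin n) ℂ := CFC.sqrt B with hCdef
  have hCsq : C * C = B := CFC.sqrt_mul_sqrt_self B hB.posSemidef.nonneg
  have hCH : Cᴴ = C := (CFC.sqrt_nonneg B).posSemidef.1
  have hCdet : IsUnit C.det := by
    have h1 : C.det * C.det = B.det := by rw [← det_mul, hCsq]
    exact isUnit_of_mul_isUnit_left (h1 ▸ hBdet)
  have hCC : C * C⁻¹ = 1 := mul_nonsing_inv _ hCdet
  have hC'C : C⁻¹ * C = 1 := nonsing_inv_mul _ hCdet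
  have cc₁ : ∀ X : Matrix (Fin n) (Fin n) ℂ, C * (C⁻¹ * X) = X := fun X => by
    rw [← Matrix.mul_assoc, hCC, Matrix.one_mul]
  have cc₂ : ∀ X : Matrix (Fin n) (Fin n) ℂ, C⁻¹ * (C * X) = X := fun X => by
    rw [← Matrix.mul_assoc, hC'C, Matrix.one_mul]
  have hBinv : B⁻¹ = C⁻¹ * C⁻¹ := by rw [← hCsq, Matrix.mul_inv_rev]
  have hCinvH : (C⁻¹)ᴴ = C⁻¹ := by rw [conjTranspose_nonsing_inv, hCH]
  constructor
  · intro hA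
    set M : Matrix (Fin n) (Fin n) ℂ := C * A * C⁻¹ with hMdef
    have hbadjM : C * (badj B A) * C⁻¹ = Mᴴ := by
      rw [hMdef, badj, hBinv, ← hCsq]
      simp only [conjTranspose_mul, hCinvH, hCH]
      simp only [Matrix.mul_assoc, cc₁, cc₂]
      rw [hCC, Matrix.mul_one]
    have hmul : ∀ X Y : Matrix (Fin n) (Fin n) ℂ,
        C * (X * Y) * C⁻¹ = (C * X * C⁻¹) * (C * Y * C⁻¹) := fun X Y => by
      simp only [Matrix.mul_assoc, cc₂]
    have hMnormal : M * Mᴴ = Mᴴ * M := by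
      rw [← hbadjM, hMdef, ← hmul, ← hmul, hA]
    obtain ⟨V, D, hV, hDdiag, hMVD⟩ := normal_spectral M hMnormal
    have hVr : V * Vᴴ = 1 := mul_eq_one_comm.mp hV
    have vv₁ : ∀ X : Matrix (Fin n) (Fin n) ℂ, V * (Vᴴ * X) = X := fun X => by
      rw [← Matrix.mul_assoc, hVr, Matrix.one_mul]
    have vv₂ : ∀ X : Matrix (Fin n) (Fin n) ℂ, Vᴴ * (V * X) = X := fun X => by
      rw [← Matrix.mul_assoc, hV, Matrix.one_mul]
    refine ⟨C⁻¹ * V, D, ?_, hDdiag, ?_⟩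
    · rw [conjTranspose_mul, hCinvH, ← hCsq]
      calc Vᴴ * C⁻¹ * (C * C) * (C⁻¹ * V)
          = Vᴴ * (C⁻¹ * (C * (C * (C⁻¹ * V)))) := by simp only [Matrix.mul_assoc]
        _ = 1 := by rw [cc₁, cc₂, hV]
    · have hUinv : (C⁻¹ * V)⁻¹ = Vᴴ * C := by
        rw [Matrix.mul_inv_rev, nonsing_inv_nonsing_inv _ hCdet, inv_eq_left_inv hV]
      rw [hUinv]
      calc A = C⁻¹ * (C * A * C⁻¹) * C := by
            simp only [Matrix.mul_assoc, cc₂]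
            rw [hC'C, Matrix.mul_one]
        _ = C⁻¹ * (V * D * Vᴴ) * C := by rw [← hMdef, ← hMVD]
        _ = C⁻¹ * V * D * (Vᴴ * C) := by simp only [Matrix.mul_assoc]
  · rintro ⟨U, D, hU, hDdiag, rfl⟩
    have hUdet : IsUnit U.det := by
      have h1 := congrArg det hU
      rw [det_mul, det_mul, det_one] at h1
      exact IsUnit.of_mul_eq_one _ (by rw [mul_comm] at h1; exact h1)
    have hUHdet : IsUnit Uᴴ.det := by rw [det_conjTranspose]; exact hUdet.star
    have hUU : U * U⁻¹ = 1 := mul_nonsing_inv _ hUdet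
    have hU'U : U⁻¹ * U = 1 := nonsing_inv_mul _ hUdet
    have uu₁ : ∀ X : Matrix (Fin n) (Fin n) ℂ, U * (U⁻¹ * X) = X := fun X => by
      rw [← Matrix.mul_assoc, hUU, Matrix.one_mul]
    have uu₂ : ∀ X : Matrix (Fin n) (Fin n) ℂ, U⁻¹ * (U * X) = X := fun X => by
      rw [← Matrix.mul_assoc, hU'U, Matrix.one_mul]
    -- B = (U⁻¹)ᴴ * U⁻¹
    have hUinvH : (U⁻¹)ᴴ = (Uᴴ)⁻¹ := conjTranspose_nonsing_inv U
    have hBeq : B = (Uᴴ)⁻¹ * U⁻¹ := by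
      have h2 : (Uᴴ)⁻¹ * (Uᴴ * B * U) * U⁻¹ = (Uᴴ)⁻¹ * U⁻¹ := by
        rw [hU, Matrix.mul_one]
      calc B = (Uᴴ)⁻¹ * (Uᴴ * B * U) * U⁻¹ := by
            simp only [Matrix.mul_assoc]
            rw [hUU, Matrix.mul_one, ← Matrix.mul_assoc, nonsing_inv_mul _ hUHdet,
              Matrix.one_mul]
        _ = (Uᴴ)⁻¹ * U⁻¹ := h2
    have hBinveq : B⁻¹ = U * Uᴴ := by
      rw [hBeq, Matrix.mul_inv_rev, nonsing_inv_nonsing_inv _ hUdet,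
        nonsing_inv_nonsing_inv _ hUHdet]
    have hbadj : badj B (U * D * U⁻¹) = U * Dᴴ * U⁻¹ := by
      rw [badj, hBinveq, hBeq]
      rw [conjTranspose_mul, conjTranspose_mul, hUinvH]
      have huh : Uᴴ * (Uᴴ)⁻¹ = 1 := mul_nonsing_inv _ hUHdet
      have huh' : ∀ X : Matrix (Fin n) (Fin n) ℂ, Uᴴ * ((Uᴴ)⁻¹ * X) = X := fun X => by
        rw [← Matrix.mul_assoc, huh, Matrix.one_mul]
      calc U * Uᴴ * ((Uᴴ)⁻¹ * (Dᴴ * Uᴴ)) * ((Uᴴ)⁻¹ * U⁻¹)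
          = U * (Uᴴ * ((Uᴴ)⁻¹ * (Dᴴ * (Uᴴ * ((Uᴴ)⁻¹ * U⁻¹))))) := by
            simp only [Matrix.mul_assoc]
        _ = U * (Dᴴ * U⁻¹) := by rw [huh', huh']
        _ = U * Dᴴ * U⁻¹ := by rw [Matrix.mul_assoc]
    rw [hbadj]
    have hDD : D * Dᴴ = Dᴴ * D := by
      have hDdiag' : D = diagonal D.diag := hDdiag.diagonal_diag.symm
      rw [hDdiag', diagonal_conjTranspose, diagonal_mul_diagonal, diagonal_mul_diagonal]
      exact congrArg diagonal (funext fun i => mul_comm _ _)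
    calc U * D * U⁻¹ * (U * Dᴴ * U⁻¹)
        = U * (D * Dᴴ) * U⁻¹ := by simp only [Matrix.mul_assoc, uu₂]
      _ = U * (Dᴴ * D) * U⁻¹ := by rw [hDD]
      _ = U * Dᴴ * U⁻¹ * (U * D * U⁻¹) := by simp only [Matrix.mul_assoc, uu₂]
end

section
/- Let R, P ∈ ℂ^{n×n_c} with RᴴAP nonsingular and let Π_A = P(RᴴAP)⁻¹RᴴA. Then Π_A is a projection, and Π_A is B-orthogonal if and only if R(P) = R(B⁻¹AᴴR), where R(·) denotes the column space. -/
open Matrix Polynomial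
open scoped ComplexOrder

lemma range_le_of_factor {n m k : ℕ} (X : Matrix (Fin n) (Fin m) ℂ)
    (Y : Matrix (Fin n) (Fin k) ℂ) (W : Matrix (Fin m) (Fin k) ℂ) (h : Y = X * W) :
    LinearMap.range Y.mulVecLin ≤ LinearMap.range X.mulVecLin := by
  rintro _ ⟨v, rfl⟩
  exact ⟨W *ᵥ v, by simp [Matrix.mulVecLin_apply, h, Matrix.mulVec_mulVec]⟩

lemma factor_of_range_le {n m k : ℕ} {X : Matrix (Fin n) (Fin m) ℂ}
    {Y : Matrix (Fin n) (Fin k) ℂ}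
    (h : LinearMap.range Y.mulVecLin ≤ LinearMap.range X.mulVecLin) :
    ∃ W : Matrix (Fin m) (Fin k) ℂ, Y = X * W := by
  have hj : ∀ j : Fin k, ∃ w : Fin m → ℂ, X *ᵥ w = Y *ᵥ Pi.single j 1 := by
    intro j
    obtain ⟨w, hw⟩ := h (LinearMap.mem_range_self Y.mulVecLin (Pi.single j 1))
    exact ⟨w, hw⟩
  choose c hc using hj
  refine ⟨Matrix.of fun i j => c j i, ?_⟩
  ext i j
  have := congrFun (hc j) i
  rw [Matrix.mulVec_single_one] at this
  simp only [Matrix.col_apply] at this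
  simp only [Matrix.mul_apply, Matrix.of_apply]
  rw [← this]
  simp [Matrix.mulVec, dotProduct]


theorem stmt9 {n n_c : ℕ} (hnc : n_c < n) (A B : Matrix (Fin n) (Fin n) ℂ)
    (hA : IsUnit A) (hB : B.PosDef)
    (R P : Matrix (Fin n) (Fin n_c) ℂ) (hcoarse : IsUnit (Rᴴ * A * P)) :
    (P * (Rᴴ * A * P)⁻¹ * Rᴴ * A) * (P * (Rᴴ * A * P)⁻¹ * Rᴴ * A) =
      P * (Rᴴ * A * P)⁻¹ * Rᴴ * A ∧
    (P * (Rᴴ * A * P)⁻¹ * Rᴴ * A = B⁻¹ * (P * (Rᴴ * A * P)⁻¹ * Rᴴ * A)ᴴ * B ↔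
      LinearMap.range P.mulVecLin = LinearMap.range (B⁻¹ * Aᴴ * R).mulVecLin) := by
  set M := (Rᴴ * A * P)⁻¹ with hMdef
  have hdet : IsUnit (Rᴴ * A * P).det := (Matrix.isUnit_iff_isUnit_det _).mp hcoarse
  have hMl : M * (Rᴴ * A * P) = 1 := Matrix.nonsing_inv_mul _ hdet
  have hMr : (Rᴴ * A * P) * M = 1 := Matrix.mul_nonsing_inv _ hdet
  have hBu : IsUnit B := hB.isUnit
  have hBdet : IsUnit B.det := (Matrix.isUnit_iff_isUnit_det _).mp hBu
  have hBBi : B * B⁻¹ = 1 := Matrix.mul_nonsing_inv _ hBdet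
  have hBiB : B⁻¹ * B = 1 := Matrix.nonsing_inv_mul _ hBdet
  have hBH : Bᴴ = B := hB.isHermitian
  -- key cancellation
  have key : ∀ X : Matrix (Fin n_c) (Fin n) ℂ, Rᴴ * (A * (P * (M * X))) = X := by
    intro X
    have h1 : Rᴴ * (A * (P * (M * X))) = ((Rᴴ * A * P) * M) * X := by
      simp only [Matrix.mul_assoc]
    rw [h1, hMr, Matrix.one_mul]
  -- part 1
  have part1 : (P * M * Rᴴ * A) * (P * M * Rᴴ * A) = P * M * Rᴴ * A := by
    have h1 : (P * M * Rᴴ * A) * (P * M * Rᴴ * A)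
        = P * (M * (Rᴴ * (A * (P * (M * (Rᴴ * A)))))) := by
      simp only [Matrix.mul_assoc]
    rw [h1, key (Rᴴ * A)]
    simp only [Matrix.mul_assoc]
  refine ⟨part1, ?_⟩
  -- adjoint formula
  have hadj : B⁻¹ * (P * M * Rᴴ * A)ᴴ * B
      = (B⁻¹ * Aᴴ * R) * (Mᴴ * (Pᴴ * B)) := by
    simp only [Matrix.conjTranspose_mul, Matrix.conjTranspose_conjTranspose, Matrix.mul_assoc]
  have hPiP : (P * M * Rᴴ * A) * P = P := by
    have h1 : (P * M * Rᴴ * A) * P = P * (M * (Rᴴ * A * P)) := by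
      simp only [Matrix.mul_assoc]
    rw [h1, hMl, Matrix.mul_one]
  have hMHl : Mᴴ * (Rᴴ * A * P)ᴴ = 1 := by
    rw [hMdef, Matrix.conjTranspose_nonsing_inv]
    exact Matrix.nonsing_inv_mul _ ((Matrix.isUnit_iff_isUnit_det _).mp ((Matrix.isUnit_conjTranspose _).mpr hcoarse))
  constructor
  · -- forward
    intro h
    have hrangeP : LinearMap.range P.mulVecLin ≤ LinearMap.range (P * M * Rᴴ * A).mulVecLin :=
      range_le_of_factor _ _ P hPiP.symm
    have hrangePi : LinearMap.range (P * M * Rᴴ * A).mulVecLin ≤ LinearMap.range P.mulVecLin :=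
      range_le_of_factor _ _ (M * (Rᴴ * A)) (by simp only [Matrix.mul_assoc])
    have hrangePi' : LinearMap.range (P * M * Rᴴ * A).mulVecLin
        ≤ LinearMap.range (B⁻¹ * Aᴴ * R).mulVecLin := by
      refine range_le_of_factor _ _ (Mᴴ * (Pᴴ * B)) ?_
      rw [h, hadj]
    have hQ : (P * M * Rᴴ * A) * (B⁻¹ * Aᴴ * R) = B⁻¹ * Aᴴ * R := by
      rw [h, hadj]
      have h2 : (B⁻¹ * Aᴴ * R) * (Mᴴ * (Pᴴ * B)) * (B⁻¹ * Aᴴ * R)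
          = B⁻¹ * (Aᴴ * (R * (Mᴴ * (Pᴴ * ((B * B⁻¹) * (Aᴴ * R)))))) := by
        simp only [Matrix.mul_assoc]
      rw [h2, hBBi, Matrix.one_mul]
      have h3 : Pᴴ * (Aᴴ * R) = (Rᴴ * A * P)ᴴ := by
        simp only [Matrix.conjTranspose_mul, Matrix.conjTranspose_conjTranspose,
          Matrix.mul_assoc]
      rw [h3, hMHl]
      simp only [Matrix.mul_one, Matrix.mul_assoc]
    have hrangeQ : LinearMap.range (B⁻¹ * Aᴴ * R).mulVecLin
        ≤ LinearMap.range (P * M * Rᴴ * A).mulVecLin :=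
      range_le_of_factor _ _ (B⁻¹ * Aᴴ * R) hQ.symm
    exact le_antisymm (hrangeP.trans hrangePi') (hrangeQ.trans hrangePi)
  · -- backward
    intro h
    obtain ⟨C, hC⟩ := factor_of_range_le h.ge
    -- hC : B⁻¹ * Aᴴ * R = P * C
    have hAR : Aᴴ * R = B * (P * C) := by
      have : B * (B⁻¹ * Aᴴ * R) = B * (P * C) := by rw [hC]
      rw [← Matrix.mul_assoc, ← Matrix.mul_assoc, hBBi, Matrix.one_mul] at this
      rw [← Matrix.mul_assoc] at this ⊢
      exact this
    have hRA : Rᴴ * A = Cᴴ * (Pᴴ * B) := by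
      have := congrArg Matrix.conjTranspose hAR
      simp only [Matrix.conjTranspose_mul, Matrix.conjTranspose_conjTranspose, hBH] at this
      rw [this]
      simp only [Matrix.mul_assoc]
    set S := Pᴴ * B * P with hSdef
    have hSH : Sᴴ = S := by
      simp only [hSdef, Matrix.conjTranspose_mul, Matrix.conjTranspose_conjTranspose, hBH,
        Matrix.mul_assoc]
    have hRAP : Rᴴ * A * P = Cᴴ * S := by
      rw [hRA, hSdef]
      simp only [Matrix.mul_assoc]
    -- S is a unit
    have hPinj : ∀ x : Fin n_c → ℂ, P *ᵥ x = 0 → x = 0 := by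
      intro x hx
      have : (Rᴴ * A * P) *ᵥ x = 0 := by
        rw [← Matrix.mulVec_mulVec, hx, Matrix.mulVec_zero]
      have hinj := Matrix.mulVec_injective_iff_isUnit.mpr hcoarse
      have := hinj (by rw [this, Matrix.mulVec_zero] : (Rᴴ * A * P) *ᵥ x = (Rᴴ * A * P) *ᵥ 0)
      exact this
    have quad : ∀ z : Fin n_c → ℂ,
        star z ⬝ᵥ S *ᵥ z = star (P *ᵥ z) ⬝ᵥ B *ᵥ (P *ᵥ z) := by
      intro z
      rw [hSdef, ← Matrix.mulVec_mulVec, ← Matrix.mulVec_mulVec, Matrix.dotProduct_mulVec,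
        Matrix.star_mulVec]
    have hSu : IsUnit S := by
      refine Matrix.mulVec_injective_iff_isUnit.mp ?_
      intro x y hxy
      have hz : S *ᵥ (x - y) = 0 := by
        rw [Matrix.mulVec_sub, hxy, sub_self]
      have hPz : P *ᵥ (x - y) = 0 := by
        by_contra hne
        have hpos := hB.dotProduct_mulVec_pos hne
        rw [← quad, hz, dotProduct_zero] at hpos
        exact lt_irrefl _ hpos
      have := hPinj _ hPz
      exact sub_eq_zero.mp this
    have hSdet : IsUnit S.det := (Matrix.isUnit_iff_isUnit_det _).mp hSu
    have hSiS : S⁻¹ * S = 1 := Matrix.nonsing_inv_mul _ hSdet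
    have hSSi : S * S⁻¹ = 1 := Matrix.mul_nonsing_inv _ hSdet
    have hCHu : IsUnit Cᴴ := by
      have : Cᴴ = (Rᴴ * A * P) * S⁻¹ := by
        rw [hRAP, Matrix.mul_assoc, hSSi, Matrix.mul_one]
      rw [this]
      exact hcoarse.mul (Matrix.isUnit_nonsing_inv_iff.mpr hSu)
    have hCHdet : IsUnit (Cᴴ).det := (Matrix.isUnit_iff_isUnit_det _).mp hCHu
    have hCHiCH : (Cᴴ)⁻¹ * Cᴴ = 1 := Matrix.nonsing_inv_mul _ hCHdet
    have hM : M = S⁻¹ * (Cᴴ)⁻¹ := by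
      rw [hMdef, hRAP, Matrix.mul_inv_rev]
    -- Π = P * S⁻¹ * Pᴴ * B
    have hPi : P * M * Rᴴ * A = P * (S⁻¹ * (Pᴴ * B)) := by
      have h1 : P * M * Rᴴ * A = P * (M * (Rᴴ * A)) := by simp only [Matrix.mul_assoc]
      rw [h1, hRA, hM]
      have h2 : S⁻¹ * (Cᴴ)⁻¹ * (Cᴴ * (Pᴴ * B)) = S⁻¹ * (((Cᴴ)⁻¹ * Cᴴ) * (Pᴴ * B)) := by
        simp only [Matrix.mul_assoc]
      rw [h2, hCHiCH, Matrix.one_mul]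
    have hSiH : S⁻¹ᴴ = S⁻¹ := by
      rw [Matrix.conjTranspose_nonsing_inv, hSH]
    rw [hPi]
    have hPiH : (P * (S⁻¹ * (Pᴴ * B)))ᴴ = B * (P * (S⁻¹ * Pᴴ)) := by
      simp only [Matrix.conjTranspose_mul, Matrix.conjTranspose_conjTranspose, hBH, hSiH,
        Matrix.mul_assoc]
    rw [hPiH]
    have h3 : B⁻¹ * (B * (P * (S⁻¹ * Pᴴ))) * B = (B⁻¹ * B) * (P * (S⁻¹ * (Pᴴ * B))) := by
      simp only [Matrix.mul_assoc]
    rw [h3, hBiB, Matrix.one_mul]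
end

section
/- Let R, P ∈ ℂ^{n×n_c} with RᴴAP nonsingular and Π_A = P(RᴴAP)⁻¹RᴴA. Then Π_A is B-orthogonal if and only if N(RᴴA) = N(PᴴB), where N(·) denotes the kernel. -/
open Matrix Polynomial
open scoped ComplexOrder

theorem stmt10 {n n_c : ℕ} (hnc : n_c < n) (A B : Matrix (Fin n) (Fin n) ℂ)
    (hA : IsUnit A) (hB : B.PosDef)
    (R P : Matrix (Fin n) (Fin n_c) ℂ) (hcoarse : IsUnit (Rᴴ * A * P)) :
    (P * (Rᴴ * A * P)⁻¹ * Rᴴ * A = B⁻¹ * (P * (Rᴴ * A * P)⁻¹ * Rᴴ * A)ᴴ * B ↔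
      LinearMap.ker (Rᴴ * A).mulVecLin = LinearMap.ker (Pᴴ * B).mulVecLin) := by
  set C := Rᴴ * A with hCdef
  set D := Pᴴ * B with hDdef
  set Q := (C * P)⁻¹ with hQdef
  have hcu : IsUnit (C * P).det := (Matrix.isUnit_iff_isUnit_det _).mp hcoarse
  have h1 : C * P * Q = 1 := Matrix.mul_nonsing_inv _ hcu
  have h2 : Q * (C * P) = 1 := Matrix.nonsing_inv_mul _ hcu
  have hBu : IsUnit B.det := (Matrix.isUnit_iff_isUnit_det _).mp hB.isUnit
  have hB1 : B * B⁻¹ = 1 := Matrix.mul_nonsing_inv _ hBu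
  have hB2 : B⁻¹ * B = 1 := Matrix.nonsing_inv_mul _ hBu
  have hPi : P * Q * Rᴴ * A = P * Q * C := by rw [hCdef, Matrix.mul_assoc]
  rw [hPi]
  set T := P * Q * C with hTdef
  clear_value Q T
  clear_value C D
  have hCT : C * T = C := by
    rw [hTdef, ← Matrix.mul_assoc, ← Matrix.mul_assoc, h1, Matrix.one_mul]
  have hTP : T * P = P := by
    rw [hTdef, Matrix.mul_assoc, Matrix.mul_assoc, h2, Matrix.mul_one]
  have hPT : Pᴴ * Tᴴ = Pᴴ := by rw [← Matrix.conjTranspose_mul, hTP]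
  have hAdjB : Tᴴ * B = Cᴴ * (Qᴴ * D) := by
    rw [hDdef, hTdef]
    simp only [Matrix.conjTranspose_mul, Matrix.mul_assoc]
  have hBBB : B * (B⁻¹ * Tᴴ * B) = Tᴴ * B := by
    rw [← Matrix.mul_assoc, ← Matrix.mul_assoc, hB1, Matrix.one_mul]
  have hfac : Pᴴ * (Tᴴ * B) = D := by
    rw [← Matrix.mul_assoc, hPT, hDdef]
  constructor
  · intro h
    ext x
    simp only [LinearMap.mem_ker, Matrix.mulVecLin_apply]
    constructor
    · intro hx
      have hTx : T *ᵥ x = 0 := by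
        rw [hTdef, ← Matrix.mulVec_mulVec, hx, Matrix.mulVec_zero]
      have h5 : (Tᴴ * B) *ᵥ x = 0 := by
        rw [← hBBB, ← Matrix.mulVec_mulVec, ← h, hTx, Matrix.mulVec_zero]
      rw [← hfac, ← Matrix.mulVec_mulVec, h5, Matrix.mulVec_zero]
    · intro hx
      have h6 : (Tᴴ * B) *ᵥ x = 0 := by
        rw [hAdjB, ← Matrix.mulVec_mulVec, ← Matrix.mulVec_mulVec, hx,
          Matrix.mulVec_zero, Matrix.mulVec_zero]
      have hTx : T *ᵥ x = 0 := by
        rw [h, Matrix.mul_assoc, ← Matrix.mulVec_mulVec, h6, Matrix.mulVec_zero]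
      rw [← hCT, ← Matrix.mulVec_mulVec, hTx, Matrix.mulVec_zero]
  · intro hk
    have hDT : D * T = D := by
      apply Matrix.toLin'.injective
      apply LinearMap.ext
      intro x
      have hker : C *ᵥ (x - T *ᵥ x) = 0 := by
        rw [Matrix.mulVec_sub, Matrix.mulVec_mulVec, hCT, sub_self]
      have hmem : (x - T *ᵥ x) ∈ LinearMap.ker C.mulVecLin := by
        simpa only [LinearMap.mem_ker, Matrix.mulVecLin_apply] using hker
      rw [hk] at hmem
      have hker2 : D *ᵥ (x - T *ᵥ x) = 0 := by
        simpa only [LinearMap.mem_ker, Matrix.mulVecLin_apply] using hmem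
      rw [Matrix.mulVec_sub, Matrix.mulVec_mulVec, sub_eq_zero] at hker2
      simp only [Matrix.toLin'_apply]
      exact hker2.symm
    have hTBT : Tᴴ * B * T = Tᴴ * B := by
      rw [hAdjB, Matrix.mul_assoc, Matrix.mul_assoc, hDT]
    have h4 : Tᴴ * (B * T) = B * T := by
      have h5 := congrArg Matrix.conjTranspose hTBT
      simp only [Matrix.conjTranspose_mul, Matrix.conjTranspose_conjTranspose, hB.1.eq] at h5
      exact h5
    have hherm : B * T = Tᴴ * B :=
      calc B * T = Tᴴ * (B * T) := h4.symm
        _ = Tᴴ * B * T := (Matrix.mul_assoc _ _ _).symm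
        _ = Tᴴ * B := hTBT
    rw [Matrix.mul_assoc, ← hherm, ← Matrix.mul_assoc, hB2, Matrix.one_mul]
end

section
/- Given a full-rank R ∈ ℂ^{n×n_c} and nonsingular A, set P* = B⁻¹AᴴR. If P*ᴴBP* is nonsingular, then Π_A(P*,R) := P*(RᴴAP*)⁻¹RᴴA equals the B-orthogonal projection P*(P*ᴴBP*)⁻¹P*ᴴB onto the column space of P*. -/
open Matrix Polynomial
open scoped ComplexOrder

theorem stmt11 {n n_c : ℕ} (A B : Matrix (Fin n) (Fin n) ℂ)
    (hA : IsUnit A) (hB : B.PosDef)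
    (R : Matrix (Fin n) (Fin n_c) ℂ) (hR : R.rank = n_c)
    (hinv : IsUnit ((B⁻¹ * Aᴴ * R)ᴴ * B * (B⁻¹ * Aᴴ * R))) :
    (B⁻¹ * Aᴴ * R) * (Rᴴ * A * (B⁻¹ * Aᴴ * R))⁻¹ * Rᴴ * A =
      (B⁻¹ * Aᴴ * R) * ((B⁻¹ * Aᴴ * R)ᴴ * B * (B⁻¹ * Aᴴ * R))⁻¹ * (B⁻¹ * Aᴴ * R)ᴴ * B := by
  have hBinvH : (B⁻¹)ᴴ = B⁻¹ := by rw [conjTranspose_nonsing_inv, hB.isHermitian.eq]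
  have hBinvB : B⁻¹ * B = 1 := nonsing_inv_mul B (isUnit_iff_ne_zero.2 (ne_of_gt hB.det_pos))
  have hkey : (B⁻¹ * Aᴴ * R)ᴴ * B = Rᴴ * A := by
    simp only [conjTranspose_mul, conjTranspose_conjTranspose, hBinvH]
    rw [Matrix.mul_assoc, Matrix.mul_assoc, hBinvB, Matrix.mul_one]
  rw [show (B⁻¹ * Aᴴ * R)ᴴ * B * (B⁻¹ * Aᴴ * R) = Rᴴ * A * (B⁻¹ * Aᴴ * R) by rw [hkey],
    Matrix.mul_assoc _ ((B⁻¹ * Aᴴ * R)ᴴ) B, hkey]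
  simp only [Matrix.mul_assoc]
end

section
/- The matrix M̂⁻¹B := M⁻¹A + (M⁻¹A)⁺ − (M⁻¹A)(M⁻¹A)⁺ is B-orthogonal (equals its B-adjoint) and has only real eigenvalues; likewise M̃⁻¹B := M⁻¹A + (M⁻¹A)⁺ − (M⁻¹A)⁺(M⁻¹A) is B-orthogonal with real eigenvalues. If moreover M⁻¹A is B-normal, then M̃⁻¹B = M̂⁻¹B. -/
open Matrix Polynomial
open scoped ComplexOrder

lemma badj_add {n : ℕ} (B X Y : Matrix (Fin n) (Fin n) ℂ) :
    badj B (X + Y) = badj B X + badj B Y := by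
  simp [badj, conjTranspose_add, Matrix.add_mul, Matrix.mul_add]

lemma badj_sub {n : ℕ} (B X Y : Matrix (Fin n) (Fin n) ℂ) :
    badj B (X - Y) = badj B X - badj B Y := by
  simp [badj, conjTranspose_sub, Matrix.sub_mul, Matrix.mul_sub]

lemma badj_mul {n : ℕ} {B : Matrix (Fin n) (Fin n) ℂ} (hB : B.PosDef)
    (X Y : Matrix (Fin n) (Fin n) ℂ) :
    badj B (X * Y) = badj B Y * badj B X := by
  have h : B * B⁻¹ = 1 := mul_nonsing_inv B (isUnit_iff_isUnit_det B |>.1 hB.isUnit)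
  simp only [badj, conjTranspose_mul]
  calc B⁻¹ * (Yᴴ * Xᴴ) * B = B⁻¹ * Yᴴ * (B * B⁻¹) * Xᴴ * B := by
        rw [h]; noncomm_ring
    _ = B⁻¹ * Yᴴ * B * (B⁻¹ * Xᴴ * B) := by noncomm_ring

lemma badj_badj {n : ℕ} {B : Matrix (Fin n) (Fin n) ℂ} (hB : B.PosDef)
    (X : Matrix (Fin n) (Fin n) ℂ) : badj B (badj B X) = X := by
  have hu : IsUnit B.det := isUnit_iff_isUnit_det B |>.1 hB.isUnit
  have h2 : B⁻¹ * B = 1 := nonsing_inv_mul B hu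
  have hBH : Bᴴ = B := hB.isHermitian
  have e1 : (B⁻¹ * Xᴴ * B)ᴴ = B * X * B⁻¹ := by
    rw [conjTranspose_mul, conjTranspose_mul, conjTranspose_nonsing_inv, hBH,
      conjTranspose_conjTranspose, Matrix.mul_assoc]
  show B⁻¹ * (B⁻¹ * Xᴴ * B)ᴴ * B = X
  rw [e1]
  calc B⁻¹ * (B * X * B⁻¹) * B = (B⁻¹ * B) * X * (B⁻¹ * B) := by noncomm_ring
    _ = X := by rw [h2]; simp

lemma real_spec {n : ℕ} {B X : Matrix (Fin n) (Fin n) ℂ} (hB : B.PosDef)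
    (h : badj B X = X) : ∀ μ ∈ spectrum ℂ X, μ.im = 0 := by
  intro μ hμ
  have hu : IsUnit B.det := isUnit_iff_isUnit_det B |>.1 hB.isUnit
  have hXB : Xᴴ * B = B * X := by
    have := congrArg (fun Y => B * Y) h
    simp only [badj, ← Matrix.mul_assoc, Matrix.mul_nonsing_inv_cancel_left B _ hu] at this
    exact this
  rw [spectrum.mem_iff] at hμ
  rw [Matrix.isUnit_iff_isUnit_det, isUnit_iff_ne_zero, ne_eq, not_not] at hμ
  obtain ⟨v, hv, hXv⟩ := (Matrix.exists_mulVec_eq_zero_iff).2 hμ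
  have heig : X *ᵥ v = μ • v := by
    have h2 : (algebraMap ℂ (Matrix (Fin n) (Fin n) ℂ)) μ *ᵥ v = μ • v := by
      rw [Algebra.algebraMap_eq_smul_one, smul_mulVec, one_mulVec]
    rw [sub_mulVec, h2, sub_eq_zero] at hXv
    exact hXv.symm
  set s : ℂ := star v ⬝ᵥ B *ᵥ v with hs
  have hspos : 0 < s := hB.dotProduct_mulVec_pos hv
  have key : μ * s = (starRingEnd ℂ) μ * s := by
    have lhs : star v ⬝ᵥ (B * X) *ᵥ v = μ * s := by
      rw [← mulVec_mulVec, heig, mulVec_smul, dotProduct_smul, smul_eq_mul]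
    have rhs : star v ⬝ᵥ (Xᴴ * B) *ᵥ v = (starRingEnd ℂ) μ * s := by
      rw [← mulVec_mulVec, dotProduct_mulVec, ← star_mulVec, heig, star_smul,
        smul_dotProduct, smul_eq_mul]
      rfl
    rw [← lhs, ← rhs, hXB]
  have : μ = (starRingEnd ℂ) μ := mul_right_cancel₀ hspos.ne' key
  have := (Complex.conj_eq_iff_im).1 this.symm
  exact this

theorem stmt12 {n : ℕ} (A Minv B : Matrix (Fin n) (Fin n) ℂ)
    (hB : B.PosDef) (hM : IsUnit Minv) :
    (badj B (Minv * A + badj B (Minv * A) - (Minv * A) * badj B (Minv * A)) =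
        Minv * A + badj B (Minv * A) - (Minv * A) * badj B (Minv * A)) ∧
    (∀ μ ∈ spectrum ℂ (Minv * A + badj B (Minv * A) - (Minv * A) * badj B (Minv * A)),
        μ.im = 0) ∧
    (badj B (Minv * A + badj B (Minv * A) - badj B (Minv * A) * (Minv * A)) =
        Minv * A + badj B (Minv * A) - badj B (Minv * A) * (Minv * A)) ∧
    (∀ μ ∈ spectrum ℂ (Minv * A + badj B (Minv * A) - badj B (Minv * A) * (Minv * A)),
        μ.im = 0) ∧
    ((Minv * A) * badj B (Minv * A) = badj B (Minv * A) * (Minv * A) →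
      Minv * A + badj B (Minv * A) - badj B (Minv * A) * (Minv * A) =
        Minv * A + badj B (Minv * A) - (Minv * A) * badj B (Minv * A)) := by

  set C := Minv * A with hC
  set D := badj B C with hD
  have h1 : badj B (C + D - C * D) = C + D - C * D := by
    rw [badj_sub, badj_add, badj_mul hB C D, show badj B D = C from badj_badj hB C, ← hD]
    abel
  have h2 : badj B (C + D - D * C) = C + D - D * C := by
    rw [badj_sub, badj_add, badj_mul hB D C, show badj B D = C from badj_badj hB C, ← hD]
    abel
  exact ⟨h1, real_spec hB h1, h2, real_spec hB h2, fun hcomm => by rw [hcomm]⟩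
end

section
/- The smoothing assumption ‖I − M⁻¹A‖_B < 1 holds if and only if M̂⁻¹ := M⁻¹AB⁻¹ + B⁻¹AᴴM⁻ᴴ − M⁻¹AB⁻¹AᴴM⁻ᴴ is HPD, if and only if the spectrum of M̂⁻¹B is contained in (0,1]. -/
open Matrix Polynomial
open scoped ComplexOrder

namespace Aux

variable {n : ℕ}

noncomputable def esq (x : Fin n → ℂ) : ℝ := (star x ⬝ᵥ x).re

lemma esq_eq_sum (x : Fin n → ℂ) : esq x = ∑ i, Complex.normSq (x i) := by
  simp [esq, dotProduct, Complex.re_sum, Complex.normSq_apply]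

lemma esq_nonneg (x : Fin n → ℂ) : 0 ≤ esq x := by
  rw [esq_eq_sum]
  exact Finset.sum_nonneg fun i _ => Complex.normSq_nonneg _

lemma esq_pos {x : Fin n → ℂ} (hx : x ≠ 0) : 0 < esq x := by
  have h := Matrix.dotProduct_star_self_pos_iff (v := x) |>.mpr hx
  rw [Complex.lt_def] at h
  exact h.1

lemma herm_dot_real {M : Matrix (Fin n) (Fin n) ℂ} (hM : M.IsHermitian) (x : Fin n → ℂ) :
    star (star x ⬝ᵥ M *ᵥ x) = star x ⬝ᵥ M *ᵥ x := by
  have h1 : star (M *ᵥ x) ⬝ᵥ x = star (star x ⬝ᵥ (M *ᵥ x)) := star_dotProduct _ _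
  rw [← h1, star_mulVec, hM.eq, dotProduct_mulVec]

lemma herm_dot_pos_iff {M : Matrix (Fin n) (Fin n) ℂ} (hM : M.IsHermitian) (x : Fin n → ℂ) :
    0 < star x ⬝ᵥ M *ᵥ x ↔ 0 < (star x ⬝ᵥ M *ᵥ x).re := by
  rw [Complex.lt_def]
  simp [Complex.conj_eq_iff_im.mp (herm_dot_real hM x)]

/-- congruence preserves positive definiteness -/
lemma posDef_conj {M N : Matrix (Fin n) (Fin n) ℂ} (hM : M.PosDef) (hN : IsUnit N) :
    (Nᴴ * M * N).PosDef := by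
  refine Matrix.PosDef.of_dotProduct_mulVec_pos (Matrix.isHermitian_conjTranspose_mul_mul _ hM.1) fun x hx => ?_
  have hx' : N *ᵥ x ≠ 0 := by
    intro h
    exact hx ((Matrix.mulVec_injective_iff_isUnit.mpr hN)
      (show N *ᵥ x = N *ᵥ 0 by simpa using h))
  have := hM.dotProduct_mulVec_pos hx'
  rwa [star_mulVec, ← Matrix.dotProduct_mulVec, Matrix.mulVec_mulVec, Matrix.mulVec_mulVec]
    at this

lemma herm_spectrum_eq {M : Matrix (Fin n) (Fin n) ℂ} (hM : M.IsHermitian) :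
    spectrum ℂ M = Set.range (fun i => (hM.eigenvalues i : ℂ)) := by
  conv_lhs => rw [hM.spectral_theorem]
  rw [Unitary.conjStarAlgAut_apply, Unitary.spectrum_star_right_conjugate, spectrum_diagonal]
  ext μ
  simp [Function.comp]

/-- quadratic form bound by eigenvalue bound for Hermitian matrices -/
lemma quad_le {Q : Matrix (Fin n) (Fin n) ℂ} (hQ : Q.IsHermitian) {c : ℝ}
    (hc : ∀ i, hQ.eigenvalues i ≤ c) (y : Fin n → ℂ) :
    (star y ⬝ᵥ Q *ᵥ y).re ≤ c * (star y ⬝ᵥ y).re := by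
  set U : Matrix (Fin n) (Fin n) ℂ := (hQ.eigenvectorUnitary : Matrix (Fin n) (Fin n) ℂ)
    with hUdef
  have hU1 : U * Uᴴ = 1 := by
    simpa [Matrix.star_eq_conjTranspose] using
      (Unitary.mul_star_self_of_mem hQ.eigenvectorUnitary.2)
  set d : Fin n → ℂ := RCLike.ofReal ∘ hQ.eigenvalues with hd
  set z : Fin n → ℂ := Uᴴ *ᵥ y with hz
  have hyz : star y ⬝ᵥ y = star z ⬝ᵥ z := by
    rw [hz, star_mulVec, conjTranspose_conjTranspose, ← dotProduct_mulVec, mulVec_mulVec, hU1,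
      one_mulVec]
  have hyQz : star y ⬝ᵥ Q *ᵥ y = star z ⬝ᵥ (diagonal d) *ᵥ z := by
    rw [hz, star_mulVec, conjTranspose_conjTranspose, ← dotProduct_mulVec, mulVec_mulVec,
      mulVec_mulVec]
    conv_lhs => rw [hQ.spectral_theorem]
    rw [Unitary.conjStarAlgAut_apply, Matrix.star_eq_conjTranspose]
  rw [hyz, hyQz]
  have hdiag : (star z ⬝ᵥ (diagonal d) *ᵥ z).re
      = ∑ i, hQ.eigenvalues i * Complex.normSq (z i) := by
    simp only [dotProduct, Matrix.mulVec_diagonal, Complex.re_sum, Pi.star_apply]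
    congr 1; ext i
    simp [hd, Complex.normSq_apply, RCLike.star_def]
    ring
  have hzz : (star z ⬝ᵥ z).re = ∑ i, Complex.normSq (z i) := by
    simp only [dotProduct, Complex.re_sum, Pi.star_apply]
    congr 1; ext i
    simp [Complex.normSq_apply, RCLike.star_def]
  rw [hdiag, hzz, Finset.mul_sum]
  exact Finset.sum_le_sum fun i _ =>
    mul_le_mul_of_nonneg_right (hc i) (Complex.normSq_nonneg _)

lemma eigvec_dot_one {Q : Matrix (Fin n) (Fin n) ℂ} (hQ : Q.IsHermitian) (i : Fin n) :
    (star ⇑(hQ.eigenvectorBasis i) ⬝ᵥ ⇑(hQ.eigenvectorBasis i)).re = 1 := by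
  have h := hQ.eigenvectorBasis.orthonormal.1 i
  have h2 := EuclideanSpace.inner_eq_star_dotProduct (hQ.eigenvectorBasis i)
    (hQ.eigenvectorBasis i)
  rw [inner_self_eq_norm_sq_to_K, h] at h2
  have : (star ⇑(hQ.eigenvectorBasis i) ⬝ᵥ ⇑(hQ.eigenvectorBasis i)) = 1 := by
    rw [dotProduct_comm, ← h2]; norm_num
  rw [this]; simp

lemma eig_of_one_sub_posDef {Q : Matrix (Fin n) (Fin n) ℂ} (hQ : Q.IsHermitian)
    (h : (1 - Q).PosDef) (i : Fin n) : hQ.eigenvalues i < 1 := by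
  set v : Fin n → ℂ := ⇑(hQ.eigenvectorBasis i) with hv
  have hvne : v ≠ 0 := by
    have := hQ.eigenvectorBasis.orthonormal.ne_zero i
    intro hc
    apply this
    ext j
    exact congrFun hc j
  have hpos := (herm_dot_pos_iff h.1 v).mp (h.dotProduct_mulVec_pos hvne)
  rw [Matrix.sub_mulVec, Matrix.one_mulVec, dotProduct_sub, Complex.sub_re] at hpos
  have heig : hQ.eigenvalues i = (star v ⬝ᵥ Q *ᵥ v).re := hQ.eigenvalues_eq i
  rw [← heig, eigvec_dot_one hQ i] at hpos
  linarith

lemma eig_one_sub_psd_le_one {P : Matrix (Fin n) (Fin n) ℂ} (hP : P.PosSemidef)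
    (hH : (1 - P).IsHermitian) (i : Fin n) : hH.eigenvalues i ≤ 1 := by
  set v : Fin n → ℂ := ⇑(hH.eigenvectorBasis i) with hv
  have heig : hH.eigenvalues i = (star v ⬝ᵥ (1 - P) *ᵥ v).re := hH.eigenvalues_eq i
  rw [Matrix.sub_mulVec, Matrix.one_mulVec, dotProduct_sub, Complex.sub_re,
    eigvec_dot_one hH i] at heig
  have hnn := hP.re_dotProduct_nonneg v
  simp only [RCLike.re_to_complex] at hnn
  linarith

lemma posDef_of_eigenvalues_pos {M : Matrix (Fin n) (Fin n) ℂ} (hM : M.IsHermitian)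
    (h : ∀ i, 0 < hM.eigenvalues i) : M.PosDef := by
  have hpsd : M.PosSemidef := hM.posSemidef_iff_eigenvalues_nonneg.mpr fun i => (h i).le
  have hdet : M.det ≠ 0 := by
    rw [hM.det_eq_prod_eigenvalues]
    refine Finset.prod_ne_zero_iff.mpr fun i _ => ?_
    exact Complex.ofReal_ne_zero.mpr (h i).ne'
  have hu : IsUnit M := (Matrix.isUnit_iff_isUnit_det M).mpr hdet.isUnit
  exact Matrix.PosDef.of_dotProduct_mulVec_pos hM fun x hx => by
    have h0 : star x ⬝ᵥ M *ᵥ x ≠ 0 := by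
      intro hc
      have h2 := (hpsd.dotProduct_mulVec_zero_iff x).mp hc
      exact hx ((Matrix.mulVec_injective_iff_isUnit.mpr hu) (h2.trans (M.mulVec_zero).symm))
    exact lt_of_le_of_ne (hpsd.dotProduct_mulVec_nonneg x) (Ne.symm h0)

lemma esq_eq_normsq (x : Fin n → ℂ) :
    esq x = ‖(WithLp.equiv 2 (Fin n → ℂ)).symm x‖ ^ 2 := by
  have h := EuclideanSpace.inner_eq_star_dotProduct ((WithLp.equiv 2 (Fin n → ℂ)).symm x)
    ((WithLp.equiv 2 (Fin n → ℂ)).symm x)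
  rw [inner_self_eq_norm_sq_to_K] at h
  change _ = x ⬝ᵥ star x at h
  rw [esq, dotProduct_comm, ← h]
  simp [← Complex.ofReal_pow]

lemma cs_sq (x w : Fin n → ℂ) : ((star x ⬝ᵥ w).re) ^ 2 ≤ esq x * esq w := by
  set Xv := (WithLp.equiv 2 (Fin n → ℂ)).symm x
  set Wv := (WithLp.equiv 2 (Fin n → ℂ)).symm w
  have h := EuclideanSpace.inner_eq_star_dotProduct Xv Wv
  have hXx : ((WithLp.equiv 2 (Fin n → ℂ)) Xv) = x := by simp [Xv]
  have hWw : ((WithLp.equiv 2 (Fin n → ℂ)) Wv) = w := by simp [Wv]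
  change _ = w ⬝ᵥ star x at h; rw [dotProduct_comm] at h
  have hb : ‖inner ℂ Xv Wv‖ ≤ ‖Xv‖ * ‖Wv‖ := norm_inner_le_norm Xv Wv
  have hre : ((star x ⬝ᵥ w).re) ^ 2 ≤ ‖inner ℂ Xv Wv‖ ^ 2 := by
    rw [h] at *
    have h2 : ((star x ⬝ᵥ w).re) ^ 2 ≤ Complex.normSq (star x ⬝ᵥ w) := by
      rw [Complex.normSq_apply]; nlinarith [sq_nonneg (star x ⬝ᵥ w).im]
    calc ((star x ⬝ᵥ w).re) ^ 2 ≤ Complex.normSq (star x ⬝ᵥ w) := h2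
    _ = ‖star x ⬝ᵥ w‖ ^ 2 := (Complex.sq_norm _).symm
    _ = ‖(star x ⬝ᵥ w)‖ ^ 2 := rfl
  calc ((star x ⬝ᵥ w).re) ^ 2 ≤ ‖inner ℂ Xv Wv‖ ^ 2 := hre
  _ ≤ (‖Xv‖ * ‖Wv‖) ^ 2 := by
      have h0 : (0:ℝ) ≤ ‖inner ℂ Xv Wv‖ := norm_nonneg _
      nlinarith
  _ = esq x * esq w := by rw [esq_eq_normsq, esq_eq_normsq]; ring

lemma dot_mul_conjT (F : Matrix (Fin n) (Fin n) ℂ) (x : Fin n → ℂ) :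
    star x ⬝ᵥ (F * Fᴴ) *ᵥ x = star (Fᴴ *ᵥ x) ⬝ᵥ (Fᴴ *ᵥ x) := by
  rw [star_mulVec, conjTranspose_conjTranspose, ← dotProduct_mulVec, mulVec_mulVec]

lemma dot_conjT_mul (F : Matrix (Fin n) (Fin n) ℂ) (x : Fin n → ℂ) :
    star x ⬝ᵥ (Fᴴ * F) *ᵥ x = star (F *ᵥ x) ⬝ᵥ (F *ᵥ x) := by
  rw [star_mulVec, ← dotProduct_mulVec, mulVec_mulVec]

lemma swap_posDef {F : Matrix (Fin n) (Fin n) ℂ} (h : (1 - Fᴴ * F).PosDef) :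
    (1 - F * Fᴴ).PosDef := by
  have hherm : (1 - F * Fᴴ).IsHermitian :=
    (Matrix.isHermitian_one).sub (Matrix.posSemidef_self_mul_conjTranspose F).1
  refine Matrix.PosDef.of_dotProduct_mulVec_pos hherm fun x hx => ?_
  rw [herm_dot_pos_iff hherm, Matrix.sub_mulVec, Matrix.one_mulVec, dotProduct_sub,
    Complex.sub_re, dot_mul_conjT]
  set z := Fᴴ *ᵥ x with hz
  by_cases hzz : z = 0
  · rw [hzz]
    have hex0 := esq_pos hx
    unfold esq at hex0
    simpa using hex0
  · have h1 := (herm_dot_pos_iff h.1 z).mp (h.dotProduct_mulVec_pos hzz)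
    rw [Matrix.sub_mulVec, Matrix.one_mulVec, dotProduct_sub, Complex.sub_re, dot_conjT_mul]
      at h1
    have hcs := cs_sq x (F *ᵥ z)
    have hxz : star x ⬝ᵥ (F *ᵥ z) = star z ⬝ᵥ z := by
      rw [dotProduct_mulVec]
      congr 1
      rw [hz, star_mulVec, conjTranspose_conjTranspose]
    rw [hxz] at hcs
    have hez := esq_pos hzz
    have hex := esq_pos hx
    unfold esq at hcs hez hex
    nlinarith [hcs, h1, hez, hex]

end Aux

set_option maxHeartbeats 1000000 in
theorem stmt13 {n : ℕ} (A Minv B : Matrix (Fin n) (Fin n) ℂ)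
    (hB : B.PosDef) (hM : IsUnit Minv) :
    (bnormM B (1 - Minv * A) < 1 ↔
      (Minv * A * B⁻¹ + B⁻¹ * Aᴴ * Minvᴴ - Minv * A * B⁻¹ * Aᴴ * Minvᴴ).PosDef) ∧
    ((Minv * A * B⁻¹ + B⁻¹ * Aᴴ * Minvᴴ - Minv * A * B⁻¹ * Aᴴ * Minvᴴ).PosDef ↔
      ∀ μ ∈ spectrum ℂ
        ((Minv * A * B⁻¹ + B⁻¹ * Aᴴ * Minvᴴ - Minv * A * B⁻¹ * Aᴴ * Minvᴴ) * B),
        μ.im = 0 ∧ 0 < μ.re ∧ μ.re ≤ 1) := by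
  classical
  have hBu : IsUnit B := hB.isUnit
  obtain ⟨S, hSpsd, hSS⟩ : ∃ S : Matrix (Fin n) (Fin n) ℂ, S.PosSemidef ∧ S * S = B :=
    by open scoped MatrixOrder in exact ⟨CFC.sqrt B, Matrix.nonneg_iff_posSemidef.mp (CFC.sqrt_nonneg B),
      CFC.sqrt_mul_sqrt_self B (Matrix.nonneg_iff_posSemidef.mpr hB.posSemidef)⟩
  have hSH : Sᴴ = S := hSpsd.1
  have hSdet : IsUnit S.det := by
    have hd : S.det * S.det = B.det := by rw [← Matrix.det_mul, hSS]
    have hb : IsUnit B.det := (Matrix.isUnit_iff_isUnit_det B).mp hBu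
    rw [← hd] at hb
    exact isUnit_of_mul_isUnit_left hb
  have hSu : IsUnit S := (Matrix.isUnit_iff_isUnit_det S).mpr hSdet
  have hSinv : S * S⁻¹ = 1 := Matrix.mul_nonsing_inv _ hSdet
  have hinvS : S⁻¹ * S = 1 := Matrix.nonsing_inv_mul _ hSdet
  have hSiH : S⁻¹ᴴ = S⁻¹ := by rw [Matrix.conjTranspose_nonsing_inv, hSH]
  have hSiu : IsUnit S⁻¹ := by
    rw [← hSu.unit_spec, ← Matrix.coe_units_inv]
    exact (hSu.unit⁻¹).isUnit
  obtain ⟨E, hE⟩ : ∃ E : Matrix (Fin n) (Fin n) ℂ, E = 1 - Minv * A := ⟨_, rfl⟩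
  obtain ⟨W, hW⟩ : ∃ W : Matrix (Fin n) (Fin n) ℂ,
    W = Minv * A * B⁻¹ + B⁻¹ * Aᴴ * Minvᴴ - Minv * A * B⁻¹ * Aᴴ * Minvᴴ := ⟨_, rfl⟩
  rw [← hW, ← hE]
  obtain ⟨F, hF⟩ : ∃ F : Matrix (Fin n) (Fin n) ℂ, F = S * E * S⁻¹ := ⟨_, rfl⟩
  have hFH : Fᴴ = S⁻¹ * Eᴴ * S := by
    rw [hF, Matrix.conjTranspose_mul, Matrix.conjTranspose_mul, hSiH, hSH, Matrix.mul_assoc]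
  have hBinvH : B⁻¹.IsHermitian := hB.isHermitian.inv
  have hWid : W = B⁻¹ - E * B⁻¹ * Eᴴ := by
    rw [hW, hE]
    simp only [Matrix.conjTranspose_sub, Matrix.conjTranspose_one, Matrix.conjTranspose_mul,
      hBinvH.eq, Matrix.sub_mul, Matrix.mul_sub, Matrix.one_mul, Matrix.mul_one,
      Matrix.mul_assoc]
    abel
  have hBinv : B⁻¹ = S⁻¹ * S⁻¹ := by rw [← hSS, Matrix.mul_inv_rev]
  have hSWS : S * W * S = 1 - F * Fᴴ := by
    rw [hWid, hBinv, Matrix.mul_sub, Matrix.sub_mul]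
    congr 1
    · calc S * (S⁻¹ * S⁻¹) * S = S * (S⁻¹ * (S⁻¹ * S)) := by simp only [Matrix.mul_assoc]
      _ = 1 := by rw [hinvS, Matrix.mul_one, hSinv]
    · rw [hFH, hF]; simp only [Matrix.mul_assoc]
  have hWsim : W = S⁻¹ * (1 - F * Fᴴ) * S⁻¹ := by
    rw [← hSWS]
    calc W = (S⁻¹ * S) * W * (S * S⁻¹) := by rw [hinvS, hSinv, Matrix.one_mul, Matrix.mul_one]
    _ = S⁻¹ * (S * W * S) * S⁻¹ := by simp only [Matrix.mul_assoc]
  have hWB : W * B = S⁻¹ * (1 - F * Fᴴ) * S := by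
    rw [hWsim, ← hSS]
    calc S⁻¹ * (1 - F * Fᴴ) * S⁻¹ * (S * S)
        = S⁻¹ * (1 - F * Fᴴ) * ((S⁻¹ * S) * S) := by simp only [Matrix.mul_assoc]
    _ = _ := by rw [hinvS, Matrix.one_mul]
  have hPD1 : W.PosDef ↔ (1 - F * Fᴴ).PosDef := by
    constructor
    · intro h
      have h2 := Aux.posDef_conj h hSu
      rw [hSH, hSWS] at h2
      exact h2
    · intro h
      have h2 := Aux.posDef_conj h hSiu
      rw [hSiH, ← hWsim] at h2
      exact h2
  have hGswap : (1 - Fᴴ * F).PosDef ↔ (1 - F * Fᴴ).PosDef := by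
    constructor
    · exact Aux.swap_posDef
    · intro h
      have h2 := Aux.swap_posDef (F := Fᴴ)
        (by rwa [Matrix.conjTranspose_conjTranspose])
      rwa [Matrix.conjTranspose_conjTranspose] at h2
  -- b-norm rewriting
  have hSHS : Sᴴ * S = B := by rw [hSH, hSS]
  have hBq : ∀ w : Fin n → ℂ, (star w ⬝ᵥ B *ᵥ w).re = Aux.esq (S *ᵥ w) := by
    intro w
    rw [← hSHS, Aux.dot_conjT_mul]
    rfl
  have hFSm : F * S = S * E := by
    rw [hF]
    calc S * E * S⁻¹ * S = S * E * (S⁻¹ * S) := by simp only [Matrix.mul_assoc]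
    _ = S * E := by rw [hinvS, Matrix.mul_one]
  have hFS : ∀ x : Fin n → ℂ, F *ᵥ (S *ᵥ x) = S *ᵥ (E *ᵥ x) := by
    intro x
    rw [Matrix.mulVec_mulVec, Matrix.mulVec_mulVec, hFSm]
  have hSmv_inj : ∀ x : Fin n → ℂ, x ≠ 0 → S *ᵥ x ≠ 0 := by
    intro x hx h
    exact hx ((Matrix.mulVec_injective_iff_isUnit.mpr hSu)
      (show S *ᵥ x = S *ᵥ 0 by simpa using h))
  have hSiS : ∀ y : Fin n → ℂ, S *ᵥ (S⁻¹ *ᵥ y) = y := by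
    intro y
    rw [Matrix.mulVec_mulVec, hSinv, Matrix.one_mulVec]
  have hsetEq : {r : ℝ | ∃ x : Fin n → ℂ, x ≠ 0 ∧ r = bnormV B (E.mulVec x) / bnormV B x}
      = {r : ℝ | ∃ y : Fin n → ℂ, y ≠ 0 ∧
          r = Real.sqrt (Aux.esq (F *ᵥ y)) / Real.sqrt (Aux.esq y)} := by
    ext r
    constructor
    · rintro ⟨x, hx, rfl⟩
      refine ⟨S *ᵥ x, hSmv_inj x hx, ?_⟩
      rw [bnormV, bnormV, hBq, hBq, hFS]
    · rintro ⟨y, hy, rfl⟩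
      refine ⟨S⁻¹ *ᵥ y, ?_, ?_⟩
      · intro h
        apply hy
        rw [← hSiS y, h, Matrix.mulVec_zero]
      · rw [bnormV, bnormV, hBq, hBq, ← hFS, hSiS]
  have hbnormEq : bnormM B E = sSup {r : ℝ | ∃ y : Fin n → ℂ, y ≠ 0 ∧
      r = Real.sqrt (Aux.esq (F *ᵥ y)) / Real.sqrt (Aux.esq y)} := by
    rw [bnormM, hsetEq]
  -- eigenvalue bound setup for G = Fᴴ * F
  have hGpsd : (Fᴴ * F).PosSemidef := Matrix.posSemidef_conjTranspose_mul_self F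
  have hGh : (Fᴴ * F).IsHermitian := hGpsd.1
  obtain ⟨c, hc⟩ : ∃ c : ℝ, c = (insert (0:ℝ) (Finset.univ.image hGh.eigenvalues)).max'
    ⟨0, Finset.mem_insert_self _ _⟩ := ⟨_, rfl⟩
  have hc0 : 0 ≤ c := hc ▸ Finset.le_max' _ _ (Finset.mem_insert_self _ _)
  have hci : ∀ i, hGh.eigenvalues i ≤ c := fun i => hc ▸
    Finset.le_max' _ _ (Finset.mem_insert_of_mem (Finset.mem_image_of_mem _ (Finset.mem_univ i)))
  have hesqF : ∀ y : Fin n → ℂ, Aux.esq (F *ᵥ y) = (star y ⬝ᵥ (Fᴴ * F) *ᵥ y).re := by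
    intro y
    rw [Aux.dot_conjT_mul]
    rfl
  have hbound : ∀ r ∈ {r : ℝ | ∃ y : Fin n → ℂ, y ≠ 0 ∧
      r = Real.sqrt (Aux.esq (F *ᵥ y)) / Real.sqrt (Aux.esq y)}, r ≤ Real.sqrt c := by
    rintro r ⟨y, hy, rfl⟩
    have h1 : Aux.esq (F *ᵥ y) ≤ c * Aux.esq y := by
      rw [hesqF]
      exact Aux.quad_le hGh hci y
    have hey : 0 < Aux.esq y := Aux.esq_pos hy
    rw [div_le_iff₀ (Real.sqrt_pos.mpr hey)]
    calc Real.sqrt (Aux.esq (F *ᵥ y)) ≤ Real.sqrt (c * Aux.esq y) := Real.sqrt_le_sqrt h1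
    _ = Real.sqrt c * Real.sqrt (Aux.esq y) := Real.sqrt_mul hc0 _
  have hmain : bnormM B E < 1 ↔ (1 - Fᴴ * F).PosDef := by
    constructor
    · intro hlt
      have hHerm : (1 - Fᴴ * F).IsHermitian := Matrix.isHermitian_one.sub hGh
      refine Matrix.PosDef.of_dotProduct_mulVec_pos hHerm fun y hy => ?_
      have hmem : Real.sqrt (Aux.esq (F *ᵥ y)) / Real.sqrt (Aux.esq y) ∈
          {r : ℝ | ∃ y : Fin n → ℂ, y ≠ 0 ∧
            r = Real.sqrt (Aux.esq (F *ᵥ y)) / Real.sqrt (Aux.esq y)} := ⟨y, hy, rfl⟩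
      have hle : Real.sqrt (Aux.esq (F *ᵥ y)) / Real.sqrt (Aux.esq y) < 1 := by
        have := le_csSup ⟨Real.sqrt c, hbound⟩ hmem
        rw [hbnormEq] at hlt
        linarith
      have hey : 0 < Aux.esq y := Aux.esq_pos hy
      have h2 : Real.sqrt (Aux.esq (F *ᵥ y)) < Real.sqrt (Aux.esq y) := by
        rw [div_lt_one (Real.sqrt_pos.mpr hey)] at hle
        exact hle
      have h3 : Aux.esq (F *ᵥ y) < Aux.esq y :=
        (Real.sqrt_lt_sqrt_iff (Aux.esq_nonneg _)).mp h2
      rw [Aux.herm_dot_pos_iff hHerm, Matrix.sub_mulVec, Matrix.one_mulVec, dotProduct_sub,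
        Complex.sub_re]
      rw [hesqF] at h3
      have : (star y ⬝ᵥ y).re = Aux.esq y := rfl
      rw [this]
      linarith
    · intro hpd
      rw [hbnormEq]
      have hlt1 : ∀ i, hGh.eigenvalues i < 1 := Aux.eig_of_one_sub_posDef hGh hpd
      have hc1 : c < 1 := by
        rw [hc]
        apply Finset.max'_lt_iff _ _ |>.mpr
        intro a ha
        rcases Finset.mem_insert.mp ha with h | h
        · rw [h]; norm_num
        · obtain ⟨i, _, rfl⟩ := Finset.mem_image.mp h
          exact hlt1 i
      calc sSup {r : ℝ | ∃ y : Fin n → ℂ, y ≠ 0 ∧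
          r = Real.sqrt (Aux.esq (F *ᵥ y)) / Real.sqrt (Aux.esq y)}
          ≤ Real.sqrt c := Real.sSup_le hbound (Real.sqrt_nonneg c)
      _ < 1 := by
          rw [show (1:ℝ) = Real.sqrt 1 by simp]
          exact Real.sqrt_lt_sqrt hc0 hc1
  -- spectrum part
  have hPfh : (F * Fᴴ).PosSemidef := Matrix.posSemidef_self_mul_conjTranspose F
  have hHh : (1 - F * Fᴴ).IsHermitian := Matrix.isHermitian_one.sub hPfh.1
  have hspec : spectrum ℂ (W * B) = Set.range (fun i => ((hHh.eigenvalues i : ℝ) : ℂ)) := by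
    rw [hWB]
    have hrw : S⁻¹ * (1 - F * Fᴴ) * S = (↑(hSu.unit⁻¹) : Matrix (Fin n) (Fin n) ℂ) *
        (1 - F * Fᴴ) * (↑hSu.unit : Matrix (Fin n) (Fin n) ℂ) := by
      rw [Matrix.coe_units_inv, hSu.unit_spec]
    rw [hrw, spectrum.units_conjugate', Aux.herm_spectrum_eq hHh]
  have hpart2 : W.PosDef ↔ ∀ μ ∈ spectrum ℂ (W * B), μ.im = 0 ∧ 0 < μ.re ∧ μ.re ≤ 1 := by
    rw [hPD1]
    constructor
    · intro hpd μ hμ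
      rw [hspec] at hμ
      obtain ⟨i, rfl⟩ := hμ
      refine ⟨Complex.ofReal_im _, ?_, ?_⟩
      · rw [Complex.ofReal_re]
        exact hpd.eigenvalues_pos i
      · rw [Complex.ofReal_re]
        exact Aux.eig_one_sub_psd_le_one hPfh hHh i
    · intro hcond
      apply Aux.posDef_of_eigenvalues_pos hHh
      intro i
      have hmem : ((hHh.eigenvalues i : ℝ) : ℂ) ∈ spectrum ℂ (W * B) := by
        rw [hspec]
        exact ⟨i, rfl⟩
      obtain ⟨_, hre, _⟩ := hcond _ hmem
      rwa [Complex.ofReal_re] at hre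
  exact ⟨hmain.trans (hGswap.trans hPD1.symm), hpart2⟩
end

section
/- Let M⁻¹A be B-normal and (λ, z) an eigenpair of M⁻¹A. Then (μ, z) with μ = λ + conj(λ) − conj(λ)λ = 1 − |λ−1|² is an eigenpair of M̂⁻¹B = M⁻¹A + (M⁻¹A)⁺ − (M⁻¹A)(M⁻¹A)⁺. -/
open Matrix Polynomial
open scoped ComplexOrder

theorem stmt14 {n : ℕ} (A Minv B : Matrix (Fin n) (Fin n) ℂ)
    (hB : B.PosDef) (hM : IsUnit Minv)
    (hnormal : (Minv * A) * badj B (Minv * A) = badj B (Minv * A) * (Minv * A))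
    (lam : ℂ) (z : Fin n → ℂ) (hz : z ≠ 0) (heig : (Minv * A).mulVec z = lam • z) :
    (Minv * A + badj B (Minv * A) - (Minv * A) * badj B (Minv * A)).mulVec z =
      (lam + (starRingEnd ℂ) lam - (starRingEnd ℂ) lam * lam) • z ∧
    lam + (starRingEnd ℂ) lam - (starRingEnd ℂ) lam * lam =
      1 - (‖lam - 1‖ : ℂ) ^ 2 := by
  set C := Minv * A with hC
  set D := badj B C with hDdef
  have hBu : IsUnit B := hB.isUnit
  have hBBinv : B * B⁻¹ = 1 := mul_nonsing_inv B ((isUnit_iff_isUnit_det B).mp hBu)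
  have hBinvB : B⁻¹ * B = 1 := nonsing_inv_mul B ((isUnit_iff_isUnit_det B).mp hBu)
  have hBH : Bᴴ = B := hB.isHermitian
  have hBD : B * D = Cᴴ * B := by
    rw [hDdef, badj, ← mul_assoc, ← mul_assoc, hBBinv, one_mul]
  have hDH : Dᴴ * B = B * C := by
    rw [hDdef, badj, conjTranspose_mul, conjTranspose_mul, conjTranspose_conjTranspose,
      conjTranspose_nonsing_inv, hBH]
    rw [mul_assoc, mul_assoc, hBinvB, mul_one]
  set s : ℂ := star z ⬝ᵥ B *ᵥ z with hs
  have key : D *ᵥ z = (starRingEnd ℂ) lam • z := by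
    set w : Fin n → ℂ := D *ᵥ z - (starRingEnd ℂ) lam • z with hw
    have a3 : star z ⬝ᵥ B *ᵥ (D *ᵥ z) = (starRingEnd ℂ) lam * s := by
      rw [mulVec_mulVec, hBD, ← mulVec_mulVec, dotProduct_mulVec, ← star_mulVec, heig]
      simp [hs, dotProduct_smul, smul_dotProduct]
    have a2 : star (D *ᵥ z) ⬝ᵥ B *ᵥ z = lam * s := by
      rw [star_mulVec, ← dotProduct_mulVec, mulVec_mulVec, hDH, ← mulVec_mulVec, heig]
      simp [hs, mulVec_smul, dotProduct_smul]
    have a1 : star (D *ᵥ z) ⬝ᵥ B *ᵥ (D *ᵥ z) = (starRingEnd ℂ) lam * (lam * s) := by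
      rw [mulVec_mulVec, star_mulVec, ← dotProduct_mulVec, mulVec_mulVec,
        show Dᴴ * (B * D) = Cᴴ * (B * C) by
          rw [← mul_assoc, hDH, mul_assoc, hnormal, ← mul_assoc, hBD, mul_assoc]]
      rw [← mul_assoc, mul_assoc, ← mulVec_mulVec, ← mulVec_mulVec, heig,
        dotProduct_mulVec, ← star_mulVec, heig]
      simp only [star_smul, smul_dotProduct, mulVec_smul, dotProduct_smul, Complex.star_def,
        smul_eq_mul, hs]
      ring
    have hzero : star w ⬝ᵥ B *ᵥ w = 0 := by
      rw [hw]
      simp only [star_sub, star_smul, mulVec_sub, mulVec_smul, sub_dotProduct,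
        dotProduct_sub, smul_dotProduct, dotProduct_smul, a1, a2, a3, Complex.star_def,
        smul_eq_mul, RingHom.coe_comp, Function.comp_apply, Complex.conj_conj,
        RingHomCompTriple.comp_apply, RingHom.id_apply]
      ring
    have hw0 : w = 0 := by
      by_contra hwne
      have h := hB.dotProduct_mulVec_pos hwne
      rw [hzero] at h
      exact lt_irrefl 0 h
    rw [hw] at hw0
    exact sub_eq_zero.mp hw0
  constructor
  · rw [sub_mulVec, add_mulVec, heig, key, ← mulVec_mulVec, key, mulVec_smul, heig]
    simp only [smul_smul, sub_smul, add_smul]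
  · have h1 : ((‖lam - 1‖ : ℝ) : ℂ) ^ 2 = (lam - 1) * (starRingEnd ℂ) (lam - 1) := by
      rw [Complex.mul_conj]
      norm_cast
      exact Complex.sq_norm _
    rw [h1]
    simp only [map_sub, RingHom.map_one]
    ring
end

section
/- Let C ∈ ℂ^{n×n} be nonsingular and Π ∈ ℂ^{n×n} a projection with Π ≠ 0, Π ≠ I and dim N(Π) = n_c < n. Then σ(CΠ) = {0} ∪ {λ_{n_c+1},…,λ_n} (0 with multiplicity n_c) if and only if σ(CΠ + (I−Π)) = {1} ∪ {λ_{n_c+1},…,λ_n} (1 with multiplicity n_c), i.e. the spectra agree except that the n_c zero eigenvalues of CΠ are replaced by eigenvalue 1. -/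
open Matrix Polynomial
open scoped ComplexOrder

lemma charmatrix_eq {n : ℕ} (M : Matrix (Fin n) (Fin n) ℂ) :
    charmatrix M = (X : ℂ[X]) • (1 : Matrix (Fin n) (Fin n) ℂ[X]) - M.map Polynomial.C := by
  rw [charmatrix, Matrix.scalar_apply, ← Matrix.smul_one_eq_diagonal]
  rfl

lemma id1 {n : ℕ} (Pr : Matrix (Fin n) (Fin n) ℂ) (hproj : Pr * Pr = Pr) :
    charmatrix Pr * charmatrix (1 - Pr) =
      ((X : ℂ[X]) ^ 2 - X) • (1 : Matrix (Fin n) (Fin n) ℂ[X]) := by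
  have hq : (Pr.map Polynomial.C) * (Pr.map Polynomial.C) = Pr.map Polynomial.C := by
    rw [← Matrix.map_mul, hproj]
  have hmap : (1 - Pr).map Polynomial.C = 1 - Pr.map Polynomial.C := by
    simp [Matrix.map_sub, Matrix.map_one]
  rw [charmatrix_eq, charmatrix_eq, hmap]
  simp only [mul_sub, sub_mul, smul_mul_assoc, mul_smul_comm, one_mul, mul_one, hq, smul_smul]
  module

lemma trace_proj {n : ℕ} (Pr : Matrix (Fin n) (Fin n) ℂ) (hproj : Pr * Pr = Pr) :
    Matrix.trace Pr = (Module.finrank ℂ (LinearMap.range Pr.mulVecLin) : ℂ) := by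
  have hP : LinearMap.IsProj (LinearMap.range Pr.mulVecLin) Pr.mulVecLin := by
    constructor
    · intro x; exact LinearMap.mem_range_self _ x
    · rintro x ⟨y, rfl⟩
      have := congrArg Matrix.mulVecLin hproj
      rw [Matrix.mulVecLin_mul] at this
      exact DFunLike.congr_fun this y
  have := hP.trace
  rw [LinearMap.trace_eq_matrix_trace ℂ (Pi.basisFun ℂ (Fin n)),
    LinearMap.toMatrix_eq_toMatrix', ← Matrix.toLin'_apply', LinearMap.toMatrix'_toLin'] at this
  exact this

lemma charpoly_proj {n n_c : ℕ} (Pr : Matrix (Fin n) (Fin n) ℂ)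
    (hproj : Pr * Pr = Pr) (hn : n_c < n)
    (hker : Module.finrank ℂ (LinearMap.ker Pr.mulVecLin) = n_c) :
    Pr.charpoly = X ^ n_c * (X - 1) ^ (n - n_c) := by
  have hdet : Pr.charpoly * (1 - Pr).charpoly = ((X : ℂ[X]) ^ 2 - X) ^ n := by
    have := congrArg Matrix.det (id1 Pr hproj)
    rwa [Matrix.det_mul, Matrix.det_smul, Matrix.det_one, mul_one, Fintype.card_fin] at this
  set p := Pr.charpoly with hp
  have hmonic : p.Monic := Pr.charpoly_monic
  have hdeg : p.natDegree = n := by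
    rw [hp, Matrix.charpoly_natDegree_eq_dim, Fintype.card_fin]
  have hsplit : p.Splits := IsAlgClosed.splits p
  have hroots : ∀ a ∈ p.roots, a = 0 ∨ a = 1 := by
    intro a ha
    have h1 : p.eval a = 0 := (Polynomial.mem_roots (hmonic.ne_zero)).1 ha
    have h2 : (a ^ 2 - a) ^ n = 0 := by
      have := congrArg (Polynomial.eval a) hdet
      simpa [h1] using this.symm
    have hnpos : n ≠ 0 := by omega
    have h3 : a ^ 2 - a = 0 := by
      exact pow_eq_zero_iff hnpos |>.mp h2
    have h4 : a * (a - 1) = 0 := by linear_combination h3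
    rcases mul_eq_zero.mp h4 with h | h
    · left; exact h
    · right; exact sub_eq_zero.mp h
  set a0 := p.roots.count 0 with ha0
  set b0 := p.roots.count 1 with hb0
  have hms : p.roots = Multiset.replicate a0 0 + Multiset.replicate b0 1 := by
    ext x
    rw [Multiset.count_add, Multiset.count_replicate, Multiset.count_replicate]
    by_cases h0 : x = 0
    · subst h0; simp [ha0]
    · by_cases h1 : x = 1
      · subst h1; simp [hb0, one_ne_zero]
      · have hx : x ∉ p.roots := fun hx => by rcases hroots x hx with h | h <;> tauto
        rw [Multiset.count_eq_zero_of_notMem hx, if_neg (fun h => h0 h.symm),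
          if_neg (fun h => h1 h.symm)]
  have hfact : p = X ^ a0 * (X - 1) ^ b0 := by
    have h := hsplit.eq_prod_roots_of_monic hmonic
    rw [hms] at h
    simpa [Multiset.prod_replicate] using h
  have hcard : a0 + b0 = n := by
    have h1 : Multiset.card p.roots = p.natDegree :=
      (Polynomial.splits_iff_card_roots).mp hsplit
    rw [hms] at h1
    simpa [hdeg] using h1
  haveI : Nonempty (Fin n) := ⟨⟨0, by omega⟩⟩
  have htr1 : Matrix.trace Pr = ((n - n_c : ℕ) : ℂ) := by
    rw [trace_proj Pr hproj]
    congr 1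
    have h2 := LinearMap.finrank_range_add_finrank_ker Pr.mulVecLin
    rw [hker, Module.finrank_fin_fun] at h2
    omega
  have htr2 : Matrix.trace Pr = (b0 : ℂ) := by
    rw [Matrix.trace_eq_neg_charpoly_coeff, Fintype.card_fin, ← hp]
    have hcoeff : p.coeff (n - 1) = p.nextCoeff := by
      rw [Polynomial.nextCoeff_of_natDegree_pos (by omega : 0 < p.natDegree), hdeg]
    have hmon1 : ((X - 1 : ℂ[X])).Monic := by simpa using Polynomial.monic_X_sub_C (1 : ℂ)
    have e1 : (X ^ a0 : ℂ[X]).nextCoeff = 0 := by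
      rw [(Polynomial.monic_X (R := ℂ)).nextCoeff_pow]
      have : (X : ℂ[X]).nextCoeff = 0 := by simp [Polynomial.nextCoeff]
      rw [this, smul_zero]
    have e2 : ((X - 1 : ℂ[X]) ^ b0).nextCoeff = -(b0 : ℂ) := by
      rw [hmon1.nextCoeff_pow]
      have : (X - 1 : ℂ[X]).nextCoeff = -1 := by
        simpa using Polynomial.nextCoeff_X_sub_C (1 : ℂ)
      rw [this]
      simp
    rw [hcoeff, hfact, Polynomial.Monic.nextCoeff_mul (Polynomial.monic_X_pow a0)
      (hmon1.pow b0), e1, e2]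
    simp
  have hb : b0 = n - n_c := by
    have := htr1.symm.trans htr2
    exact_mod_cast this.symm
  have ha : a0 = n_c := by omega
  rw [hfact, ha, hb]

lemma id2 {n : ℕ} (A Pr : Matrix (Fin n) (Fin n) ℂ) (hproj : Pr * Pr = Pr)
    (hA : A * Pr = A) :
    charmatrix (A + (1 - Pr)) * charmatrix Pr = ((X : ℂ[X]) - 1) • charmatrix A := by
  have hq : (Pr.map Polynomial.C) * (Pr.map Polynomial.C) = Pr.map Polynomial.C := by
    rw [← Matrix.map_mul, hproj]
  have haq : (A.map Polynomial.C) * (Pr.map Polynomial.C) = A.map Polynomial.C := by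
    rw [← Matrix.map_mul, hA]
  have hmap : (A + (1 - Pr)).map Polynomial.C = A.map Polynomial.C + (1 - Pr.map Polynomial.C) := by
    simp [Matrix.map_add, Matrix.map_sub, Matrix.map_one]
  rw [charmatrix_eq, charmatrix_eq, charmatrix_eq, hmap]
  simp only [mul_sub, sub_mul, add_mul, mul_add, smul_mul_assoc, mul_smul_comm, one_mul, mul_one,
    hq, haq, smul_smul, smul_sub]
  module

theorem stmt16 {n n_c : ℕ} (hnc : n_c < n)
    (C Pr : Matrix (Fin n) (Fin n) ℂ) (hC : IsUnit C)
    (hproj : Pr * Pr = Pr) (h0 : Pr ≠ 0) (hI : Pr ≠ 1)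
    (hker : Module.finrank ℂ (LinearMap.ker Pr.mulVecLin) = n_c) :
    ∀ s : Multiset ℂ, Multiset.card s = n - n_c →
      ((C * Pr).charpoly = X ^ n_c * (s.map (fun μ => X - Polynomial.C μ)).prod ↔
        (C * Pr + (1 - Pr)).charpoly =
          (X - 1) ^ n_c * (s.map (fun μ => X - Polynomial.C μ)).prod) := by
  intro s hs
  set P := (s.map (fun μ => X - Polynomial.C μ)).prod with hP
  have hA : (C * Pr) * Pr = C * Pr := by rw [mul_assoc, hproj]
  have key : (C * Pr + (1 - Pr)).charpoly * Pr.charpoly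
      = ((X : ℂ[X]) - 1) ^ n * (C * Pr).charpoly := by
    have h := congrArg Matrix.det (id2 (C * Pr) Pr hproj hA)
    rw [Matrix.det_mul, Matrix.det_smul, Fintype.card_fin] at h
    exact h
  rw [charpoly_proj Pr hproj hnc hker] at key
  have hmon1 : ((X - 1 : ℂ[X])).Monic := by simpa using Polynomial.monic_X_sub_C (1 : ℂ)
  have hX1ne : ((X : ℂ[X]) - 1) ^ (n - n_c) ≠ 0 := pow_ne_zero _ hmon1.ne_zero
  have hpow : ((X : ℂ[X]) - 1) ^ n = (X - 1) ^ n_c * (X - 1) ^ (n - n_c) := by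
    rw [← pow_add]; congr 1; omega
  rw [hpow] at key
  have keq : (X : ℂ[X]) ^ n_c * (C * Pr + (1 - Pr)).charpoly
      = (X - 1) ^ n_c * (C * Pr).charpoly := by
    apply mul_right_cancel₀ hX1ne
    linear_combination key
  constructor
  · intro h
    apply mul_left_cancel₀ (pow_ne_zero n_c (Polynomial.X_ne_zero (R := ℂ)))
    rw [h] at keq
    linear_combination keq
  · intro h
    apply mul_left_cancel₀ (pow_ne_zero n_c hmon1.ne_zero)
    rw [h] at keq
    linear_combination -keq
end

section
/- Let C ∈ ℂ^{n×n} be B-normal with σ(C) ⊆ (0,1), and Π ∈ ℂ^{n×n} a B-orthogonal projection with Π ≠ 0 and Π ≠ I. Then ρ(I − CΠ − (I−Π)) = λ_max(I − CΠ − (I−Π)) = 1 − λ_min⁺(CΠ), where λ_min⁺ denotes the smallest positive eigenvalue, and λ_min⁺(CΠ) ∈ (0,1). Moreover σ(I − CΠ − (I−Π)) ⊆ [0,1). -/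
open Matrix Polynomial
open scoped ComplexOrder

section StmtAux

variable {n : ℕ}

private lemma mem_spec_iff' (A : Matrix (Fin n) (Fin n) ℂ) (μ : ℂ) :
    μ ∈ spectrum ℂ A ↔ ∃ v, v ≠ 0 ∧ A *ᵥ v = μ • v := by
  rw [spectrum.mem_iff, Matrix.isUnit_iff_isUnit_det, isUnit_iff_ne_zero, not_not,
    ← Matrix.exists_mulVec_eq_zero_iff]
  constructor
  · rintro ⟨v, hv, hv'⟩
    refine ⟨v, hv, ?_⟩
    rw [Algebra.algebraMap_eq_smul_one, Matrix.sub_mulVec, Matrix.smul_mulVec,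
      Matrix.one_mulVec, sub_eq_zero] at hv'
    exact hv'.symm
  · rintro ⟨v, hv, hv'⟩
    exact ⟨v, hv, by rw [Algebra.algebraMap_eq_smul_one, Matrix.sub_mulVec,
      Matrix.smul_mulVec, Matrix.one_mulVec, hv', sub_self]⟩
private lemma spec_conj' {S : Matrix (Fin n) (Fin n) ℂ} (hS : IsUnit S.det)
    (A : Matrix (Fin n) (Fin n) ℂ) : spectrum ℂ (S * A * S⁻¹) = spectrum ℂ A := by
  have h1 : S * S⁻¹ = 1 := Matrix.mul_nonsing_inv S hS
  ext μ
  rw [spectrum.mem_iff, spectrum.mem_iff, Matrix.isUnit_iff_isUnit_det,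
    Matrix.isUnit_iff_isUnit_det]
  have key : algebraMap ℂ _ μ - S * A * S⁻¹ = S * (algebraMap ℂ _ μ - A) * S⁻¹ := by
    rw [Algebra.algebraMap_eq_smul_one, Matrix.mul_sub, Matrix.sub_mul]
    congr 2
    rw [Matrix.mul_smul, mul_one, Matrix.smul_mul, h1]
  rw [key, Matrix.det_mul, Matrix.det_mul]
  have h2 : S.det * (algebraMap ℂ _ μ - A).det * S⁻¹.det
      = (algebraMap ℂ _ μ - A).det * (S * S⁻¹).det := by
    rw [Matrix.det_mul]; ring
  rw [h2, h1, Matrix.det_one, mul_one]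
private lemma dot_herm' {P : Matrix (Fin n) (Fin n) ℂ} (hP : Pᴴ = P) (x z : Fin n → ℂ) :
    star x ⬝ᵥ (P *ᵥ z) = star (P *ᵥ x) ⬝ᵥ z := by
  rw [Matrix.dotProduct_mulVec]
  congr 1
  rw [Matrix.star_mulVec, hP]
private lemma mu_real' {μ t d : ℂ} (e : μ * t = d) (ht : 0 < t) (hd : 0 < d) (htd : 0 < t - d) :
    μ.im = 0 ∧ 0 < μ.re ∧ μ.re < 1 := by
  rw [Complex.lt_def] at ht hd htd
  simp only [Complex.zero_re, Complex.zero_im, Complex.sub_re, Complex.sub_im] at ht hd htd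
  obtain ⟨ht1, ht2⟩ := ht
  obtain ⟨hd1, hd2⟩ := hd
  obtain ⟨htd1, htd2⟩ := htd
  have htim : t.im = 0 := ht2.symm
  have hdim : d.im = 0 := hd2.symm
  have er : μ.re * t.re - μ.im * t.im = d.re := by rw [← Complex.mul_re, e]
  have ei : μ.re * t.im + μ.im * t.re = d.im := by rw [← Complex.mul_im, e]
  rw [htim, hdim, mul_zero, zero_add] at ei
  have him : μ.im = 0 := by
    rcases mul_eq_zero.mp ei with h | h
    · exact h
    · linarith
  rw [htim, mul_zero, sub_zero] at er
  refine ⟨him, ?_, ?_⟩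
  · nlinarith
  · nlinarith
private lemma key' {C1 P1 : Matrix (Fin n) (Fin n) ℂ} (hC1 : C1.PosDef)
    (hC1' : (1 - C1).PosDef) (hPh : P1ᴴ = P1) (hPP : P1 * P1 = P1) :
    ∀ μ ∈ spectrum ℂ (C1 * P1), μ ≠ 0 →
      μ.im = 0 ∧ 0 < μ.re ∧ μ.re < 1 ∧ (1 - μ) ∈ spectrum ℂ ((1 - C1) * P1) := by
  intro μ hμ hμ0
  obtain ⟨v, hv, hv'⟩ := (mem_spec_iff' _ _).mp hμ
  set y := P1 *ᵥ v with hy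
  have hCPv : (C1 * P1) *ᵥ v = C1 *ᵥ y := by rw [hy, Matrix.mulVec_mulVec]
  have hy0 : y ≠ 0 := by
    intro h
    apply hv
    have : C1 *ᵥ y = μ • v := by rw [← hCPv, hv']
    rw [h, Matrix.mulVec_zero] at this
    rcases smul_eq_zero.mp this.symm with h' | h'
    · exact absurd h' hμ0
    · exact h'
  have hyy : P1 *ᵥ y = y := by rw [hy, Matrix.mulVec_mulVec, hPP]
  have h1 : P1 *ᵥ (C1 *ᵥ y) = μ • y := by
    have := congrArg (fun w => P1 *ᵥ w) hv'
    simp only [hCPv] at this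
    rw [this, Matrix.mulVec_smul]
  set t := star y ⬝ᵥ y with hts
  set d := star y ⬝ᵥ (C1 *ᵥ y) with hds
  have hd : 0 < d := hC1.dotProduct_mulVec_pos hy0
  have ht : 0 < t := Matrix.dotProduct_star_self_pos_iff.mpr hy0
  have htd : 0 < t - d := by
    have := hC1'.dotProduct_mulVec_pos hy0
    rwa [Matrix.sub_mulVec, Matrix.one_mulVec, dotProduct_sub] at this
  have e : μ * t = d := by
    have h2 : star y ⬝ᵥ (P1 *ᵥ (C1 *ᵥ y)) = d := by
      rw [dot_herm' hPh, hyy]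
    rw [h1] at h2
    rw [dotProduct_smul] at h2
    simpa using h2
  obtain ⟨him, hre0, hre1⟩ := mu_real' e ht hd htd
  refine ⟨him, hre0, hre1, ?_⟩
  set w := (1 - C1) *ᵥ y with hw
  have hw0 : w ≠ 0 := by
    intro h
    have := hC1'.dotProduct_mulVec_pos hy0
    rw [← hw, h, dotProduct_zero] at this
    exact lt_irrefl 0 this
  refine (mem_spec_iff' _ _).mpr ⟨w, hw0, ?_⟩
  have hP1w : P1 *ᵥ w = (1 - μ) • y := by
    rw [hw, Matrix.sub_mulVec, Matrix.one_mulVec, Matrix.mulVec_sub, hyy, h1, sub_smul, one_smul]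
  rw [← Matrix.mulVec_mulVec, hP1w, Matrix.mulVec_smul, hw]
private lemma spec_one_sub' (A : Matrix (Fin n) (Fin n) ℂ) (μ : ℂ) :
    μ ∈ spectrum ℂ (1 - A) ↔ 1 - μ ∈ spectrum ℂ A := by
  rw [spectrum.mem_iff, spectrum.mem_iff]
  have : algebraMap ℂ _ μ - (1 - A) = -(algebraMap ℂ _ (1 - μ) - A) := by
    simp only [map_sub, _root_.map_one]
    abel
  rw [this, IsUnit.neg_iff]
private lemma exists_herm_sqrt' {A : Matrix (Fin n) (Fin n) ℂ} (hA : A.PosSemidef) :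
    ∃ Q : Matrix (Fin n) (Fin n) ℂ, Qᴴ = Q ∧ Q * Q = A := by
  classical
  open scoped MatrixOrder in
  exact ⟨CFC.sqrt A, (CFC.sqrt_nonneg A).posSemidef.1, CFC.sqrt_mul_sqrt_self A hA.nonneg⟩
private lemma posDef_of_spec' {A : Matrix (Fin n) (Fin n) ℂ} (hA : A.IsHermitian)
    (h : ∀ μ ∈ spectrum ℂ A, 0 < μ.re) : A.PosDef := by
  have heig : ∀ i, 0 < hA.eigenvalues i := by
    intro i
    have h1 : (hA.eigenvalues i : ℝ) ∈ spectrum ℝ A := hA.eigenvalues_mem_spectrum_real i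
    have h2 : ((hA.eigenvalues i : ℝ) : ℂ) ∈ spectrum ℂ A := by
      have := (spectrum.algebraMap_mem_iff (S := ℂ) (R := ℝ)
        (A := Matrix (Fin n) (Fin n) ℂ)).mpr h1
      simpa using this
    simpa using h (hA.eigenvalues i) h2
  have hPSD : A.PosSemidef := hA.posSemidef_iff_eigenvalues_nonneg.mpr (Pi.le_def.mpr fun i => (heig i).le)
  have hdet : A.det ≠ 0 := by
    rw [hA.det_eq_prod_eigenvalues]
    refine Finset.prod_ne_zero_iff.mpr fun i _ => ?_
    exact Complex.ofReal_ne_zero.mpr (heig i).ne'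
  obtain ⟨Q, hQh, hQQ⟩ := exists_herm_sqrt' hPSD
  have hQdet : Q.det ≠ 0 := by
    intro h0
    apply hdet
    rw [← hQQ, Matrix.det_mul, h0, mul_zero]
  refine PosDef.of_dotProduct_mulVec_pos hA fun x hx => ?_
  have hkey : star x ⬝ᵥ (A *ᵥ x) = star (Q *ᵥ x) ⬝ᵥ (Q *ᵥ x) := by
    rw [Matrix.star_mulVec, hQh, ← Matrix.dotProduct_mulVec, Matrix.mulVec_mulVec, hQQ]
  rw [hkey]
  refine Matrix.dotProduct_star_self_pos_iff.mpr fun h0 => hx ?_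
  exact Matrix.eq_zero_of_mulVec_eq_zero hQdet h0
private lemma herm_of_normal' {A : Matrix (Fin n) (Fin n) ℂ}
    (hn : A * Aᴴ = Aᴴ * A) (hs : ∀ μ ∈ spectrum ℂ A, μ.im = 0) : Aᴴ = A := by
  set T := Matrix.toEuclideanCLM (𝕜 := ℂ) (n := Fin n) A with hT
  have hnT : IsStarNormal T := by
    constructor
    rw [Commute, SemiconjBy, hT, ← map_star, ← _root_.map_mul, ← _root_.map_mul,
      Matrix.star_eq_conjTranspose, hn]
  have hspecT : spectrum ℂ T = spectrum ℂ A := AlgEquiv.spectrum_eq _ _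
  have hres : SpectrumRestricts T Complex.reCLM := by
    refine SpectrumRestricts.of_subset_range_algebraMap (fun r => by simp) ?_
    intro μ hμ
    rw [hspecT] at hμ
    refine ⟨μ.re, ?_⟩
    have := hs μ hμ
    apply Complex.ext
    · simp
    · simp [this]
  have hsa : IsSelfAdjoint T :=
    isSelfAdjoint_iff_isStarNormal_and_quasispectrumRestricts.mpr ⟨hnT, hres⟩
  have h2 := hsa.star_eq
  rw [hT, ← map_star] at h2
  have h3 := (Matrix.toEuclideanCLM (𝕜 := ℂ) (n := Fin n)).injective h2
  rwa [Matrix.star_eq_conjTranspose] at h3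
private lemma zero_mem_spec' {X P : Matrix (Fin n) (Fin n) ℂ} (hP : P.det = 0) :
    (0 : ℂ) ∈ spectrum ℂ (X * P) := by
  rw [spectrum.mem_iff, map_zero, zero_sub, IsUnit.neg_iff, Matrix.isUnit_iff_isUnit_det,
    Matrix.det_mul, hP, mul_zero, isUnit_iff_ne_zero]
  simp
private lemma exists_pos_eig' {C1 P1 : Matrix (Fin n) (Fin n) ℂ} (hC1 : C1.PosDef)
    (hPh : P1ᴴ = P1) (hPP : P1 * P1 = P1) (hP0 : P1 ≠ 0) :
    ∃ μ : ℂ, μ ≠ 0 ∧ μ ∈ spectrum ℂ (C1 * P1) := by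
  set A2 := P1 * C1 * P1 with hA2
  have hC1h : C1ᴴ = C1 := hC1.1
  have hA2h : A2.IsHermitian := by
    show A2ᴴ = A2
    rw [hA2, Matrix.conjTranspose_mul, Matrix.conjTranspose_mul, hC1h, hPh, mul_assoc]
  -- find x with P1 *ᵥ x ≠ 0
  obtain ⟨x, hx⟩ : ∃ x, P1 *ᵥ x ≠ 0 := by
    by_contra h
    push_neg at h
    apply hP0
    ext i j
    have := congrFun (h (Pi.single j 1)) i
    simpa [Matrix.mulVec_single] using this
  have hpos : 0 < star x ⬝ᵥ (A2 *ᵥ x) := by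
    have h1 : A2 *ᵥ x = P1 *ᵥ (C1 *ᵥ (P1 *ᵥ x)) := by
      rw [hA2, ← Matrix.mulVec_mulVec, ← Matrix.mulVec_mulVec]
    rw [h1, dot_herm' hPh]
    exact hC1.dotProduct_mulVec_pos hx
  have hA20 : A2 ≠ 0 := by
    intro h
    rw [h, Matrix.zero_mulVec, dotProduct_zero] at hpos
    exact lt_irrefl 0 hpos
  obtain ⟨v, t, ht, hv, hv'⟩ := hA2h.exists_eigenvector_of_ne_zero hA20
  have hP1A2 : P1 * A2 = A2 := by rw [hA2, ← mul_assoc, ← mul_assoc, hPP]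
  have hPv : P1 *ᵥ v = v := by
    have h1 : P1 *ᵥ (A2 *ᵥ v) = A2 *ᵥ v := by rw [Matrix.mulVec_mulVec, hP1A2]
    rw [hv', Matrix.mulVec_smul] at h1
    exact smul_right_injective (Fin n → ℂ) ht h1
  have hPCv : P1 *ᵥ (C1 *ᵥ v) = t • v := by
    have : A2 *ᵥ v = P1 *ᵥ (C1 *ᵥ (P1 *ᵥ v)) := by
      rw [hA2, ← Matrix.mulVec_mulVec, ← Matrix.mulVec_mulVec]
    rw [this, hPv] at hv'
    exact hv'
  set z := C1 *ᵥ v with hz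
  have hz0 : z ≠ 0 := by
    intro h
    have := hC1.dotProduct_mulVec_pos hv
    rw [← hz, h, dotProduct_zero] at this
    exact lt_irrefl 0 this
  refine ⟨(t : ℂ), Complex.ofReal_ne_zero.mpr ht, (mem_spec_iff' _ _).mpr ⟨z, hz0, ?_⟩⟩
  rw [← Matrix.mulVec_mulVec, hPCv, Matrix.mulVec_smul]
  ext i
  simp [Complex.real_smul, hz]

end StmtAux

theorem stmt17 {n : ℕ} (B C Pr : Matrix (Fin n) (Fin n) ℂ)
    (hB : B.PosDef) (hnormal : C * badj B C = badj B C * C)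
    (hspec : ∀ μ ∈ spectrum ℂ C, μ.im = 0 ∧ 0 < μ.re ∧ μ.re < 1)
    (hproj : Pr * Pr = Pr) (horth : Pr = B⁻¹ * Prᴴ * B) (h0 : Pr ≠ 0) (hI : Pr ≠ 1) :
    specRad (1 - C * Pr - (1 - Pr)) = lamMax (1 - C * Pr - (1 - Pr)) ∧
    lamMax (1 - C * Pr - (1 - Pr)) = 1 - lamMinPos (C * Pr) ∧
    lamMinPos (C * Pr) ∈ Set.Ioo (0 : ℝ) 1 ∧
    (∀ μ ∈ spectrum ℂ (1 - C * Pr - (1 - Pr)), μ.im = 0 ∧ 0 ≤ μ.re ∧ μ.re < 1) := by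
  classical
  have hMrw : 1 - C * Pr - (1 - Pr) = Pr - C * Pr := by abel
  -- square root of B
  obtain ⟨S, hSh, hSS⟩ := exists_herm_sqrt' hB.posSemidef
  have hSdet : IsUnit S.det := by
    rw [isUnit_iff_ne_zero]
    intro h
    have h2 : S.det * S.det = B.det := by rw [← Matrix.det_mul, hSS]
    rw [h, mul_zero] at h2
    exact hB.det_pos.ne' h2.symm
  have hSS1 : S * S⁻¹ = 1 := Matrix.mul_nonsing_inv S hSdet
  have hS1S : S⁻¹ * S = 1 := Matrix.nonsing_inv_mul S hSdet
  have hSih : (S⁻¹)ᴴ = S⁻¹ := by rw [Matrix.conjTranspose_nonsing_inv, hSh]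
  have hBi : B⁻¹ = S⁻¹ * S⁻¹ := by rw [← hSS, Matrix.mul_inv_rev]
  have cX : ∀ X : Matrix (Fin n) (Fin n) ℂ, S * (S⁻¹ * X) = X := fun X => by
    rw [← mul_assoc, hSS1, one_mul]
  have cY : ∀ X : Matrix (Fin n) (Fin n) ℂ, S⁻¹ * (S * X) = X := fun X => by
    rw [← mul_assoc, hS1S, one_mul]
  set P1 := S * Pr * S⁻¹ with hP1def
  set C1 := S * C * S⁻¹ with hC1def
  have conj_mul : ∀ X Y : Matrix (Fin n) (Fin n) ℂ,
      (S * X * S⁻¹) * (S * Y * S⁻¹) = S * (X * Y) * S⁻¹ := fun X Y => by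
    simp only [mul_assoc, cX, cY]
  have hP1P1 : P1 * P1 = P1 := by rw [hP1def, conj_mul, hproj]
  have hP1h : P1ᴴ = P1 := by
    have h1 : P1ᴴ = S⁻¹ * Prᴴ * S := by
      rw [hP1def]
      simp only [Matrix.conjTranspose_mul, hSh, hSih, mul_assoc]
    have h2 : P1 = S⁻¹ * Prᴴ * S := by
      rw [hP1def]
      conv_lhs => rw [horth]
      rw [hBi, ← hSS]
      simp only [mul_assoc, cX, cY]
      rw [hSS1, mul_one]
    rw [h1, h2]
  have hC1ct : C1ᴴ = S * badj B C * S⁻¹ := by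
    rw [hC1def, badj, hBi, ← hSS]
    simp only [Matrix.conjTranspose_mul, hSh, hSih, mul_assoc, cX, cY]
    rw [hSS1, mul_one]
  have hC1n : C1 * C1ᴴ = C1ᴴ * C1 := by
    rw [hC1ct, hC1def, conj_mul, conj_mul, hnormal]
  have hspecC1 : spectrum ℂ C1 = spectrum ℂ C := spec_conj' hSdet C
  have hC1herm : C1ᴴ = C1 :=
    herm_of_normal' hC1n fun μ h => (hspec μ (hspecC1 ▸ h)).1
  have hC1pos : C1.PosDef :=
    posDef_of_spec' hC1herm fun μ h => (hspec μ (hspecC1 ▸ h)).2.1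
  have h1C1herm : (1 - C1).IsHermitian := by
    show (1 - C1)ᴴ = 1 - C1
    rw [Matrix.conjTranspose_sub, Matrix.conjTranspose_one, hC1herm]
  have h1C1pos : (1 - C1).PosDef := by
    refine posDef_of_spec' h1C1herm fun μ h => ?_
    have h2 : 1 - μ ∈ spectrum ℂ C := hspecC1 ▸ (spec_one_sub' C1 μ).mp h
    have := (hspec _ h2).2.2
    simp only [Complex.sub_re, Complex.one_re] at this
    linarith
  have hP10 : P1 ≠ 0 := by
    intro h
    apply h0
    have : Pr = S⁻¹ * P1 * S := by
      rw [hP1def]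
      simp only [mul_assoc, cX, cY]
      rw [hS1S, mul_one]
    rw [this, h, mul_zero, zero_mul]
  -- spectra transfers
  have hCP : C1 * P1 = S * (C * Pr) * S⁻¹ := by rw [hC1def, hP1def, conj_mul]
  have hspecCP : spectrum ℂ (C * Pr) = spectrum ℂ (C1 * P1) := by
    rw [hCP, spec_conj' hSdet]
  have hMM : (1 - C1) * P1 = S * (1 - C * Pr - (1 - Pr)) * S⁻¹ := by
    rw [hMrw, sub_mul, one_mul, Matrix.mul_sub, Matrix.sub_mul, hCP, hP1def]
  have hspecM : spectrum ℂ (1 - C * Pr - (1 - Pr)) = spectrum ℂ ((1 - C1) * P1) := by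
    rw [hMM, spec_conj' hSdet]
  have hsub2 : (1 - (1 - C1)) = C1 := by rw [sub_sub_cancel]
  -- the four key facts
  have K1 : ∀ μ ∈ spectrum ℂ (C * Pr), μ ≠ 0 →
      μ.im = 0 ∧ 0 < μ.re ∧ μ.re < 1 ∧ (1 - μ) ∈ spectrum ℂ (1 - C * Pr - (1 - Pr)) := by
    intro μ hμ hμ0
    have := key' hC1pos h1C1pos hP1h hP1P1 μ (hspecCP ▸ hμ) hμ0
    exact ⟨this.1, this.2.1, this.2.2.1, hspecM ▸ this.2.2.2⟩
  have K2 : ∀ μ ∈ spectrum ℂ (1 - C * Pr - (1 - Pr)), μ ≠ 0 →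
      μ.im = 0 ∧ 0 < μ.re ∧ μ.re < 1 ∧ (1 - μ) ∈ spectrum ℂ (C * Pr) := by
    intro μ hμ hμ0
    have hC1pos' : (1 - (1 - C1)).PosDef := by rw [hsub2]; exact hC1pos
    have := key' h1C1pos hC1pos' hP1h hP1P1 μ (hspecM ▸ hμ) hμ0
    refine ⟨this.1, this.2.1, this.2.2.1, ?_⟩
    have h2 := this.2.2.2
    rw [hsub2] at h2
    exact hspecCP ▸ h2
  have hPrdet : Pr.det = 0 := by
    by_contra h
    apply hI
    have hu : IsUnit Pr.det := isUnit_iff_ne_zero.mpr h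
    have h1 : Pr * Pr⁻¹ = 1 := Matrix.mul_nonsing_inv Pr hu
    calc Pr = Pr * Pr * Pr⁻¹ := by rw [mul_assoc, h1, mul_one]
    _ = 1 := by rw [hproj, h1]
  have K3 : (0 : ℂ) ∈ spectrum ℂ (1 - C * Pr - (1 - Pr)) := by
    rw [hMrw, show Pr - C * Pr = (1 - C) * Pr by rw [sub_mul, one_mul]]
    exact zero_mem_spec' hPrdet
  have K4 : ∃ μ : ℂ, μ ≠ 0 ∧ μ ∈ spectrum ℂ (C * Pr) := by
    obtain ⟨μ, h1, h2⟩ := exists_pos_eig' hC1pos hP1h hP1P1 hP10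
    exact ⟨μ, h1, hspecCP ▸ h2⟩
  -- real sets
  set T := {r : ℝ | 0 < r ∧ (r : ℂ) ∈ spectrum ℂ (C * Pr)} with hTdef
  have hTfin : T.Finite := by
    apply Set.Finite.subset ((Matrix.finite_spectrum (C * Pr)).image Complex.re)
    rintro r ⟨hr, hmem⟩
    exact ⟨(r : ℂ), hmem, by simp⟩
  have hTne : T.Nonempty := by
    obtain ⟨μ, hμ0, hμ⟩ := K4
    obtain ⟨him, hr0, hr1, -⟩ := K1 μ hμ hμ0
    refine ⟨μ.re, hr0, ?_⟩
    rwa [show ((μ.re : ℝ) : ℂ) = μ from Complex.ext (by simp) (by simp [him])]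
  have hTsub : T ⊆ Set.Ioo 0 1 := by
    rintro r ⟨hr, hmem⟩
    have := K1 _ hmem (Complex.ofReal_ne_zero.mpr hr.ne')
    exact ⟨hr, by simpa using this.2.2.1⟩
  have hm : sInf T ∈ T := hTne.csInf_mem hTfin
  have hmIoo : sInf T ∈ Set.Ioo (0 : ℝ) 1 := hTsub hm
  set R := {r : ℝ | (r : ℂ) ∈ spectrum ℂ (1 - C * Pr - (1 - Pr))} with hRdef
  have hReq : R = insert 0 ((fun s => 1 - s) '' T) := by
    ext r
    constructor
    · intro hr
      by_cases hr0 : r = 0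
      · exact Or.inl hr0
      · have := K2 _ hr (Complex.ofReal_ne_zero.mpr hr0)
        refine Or.inr ⟨1 - r, ⟨?_, ?_⟩, by ring⟩
        · have := this.2.2.1
          simp only [Complex.ofReal_re] at this
          linarith
        · have h2 := this.2.2.2
          rwa [show (1 : ℂ) - (r : ℝ) = ((1 - r : ℝ) : ℂ) by push_cast; ring] at h2
    · rintro (rfl | ⟨s, hs, rfl⟩)
      · show ((0 : ℝ) : ℂ) ∈ spectrum ℂ (1 - C * Pr - (1 - Pr))
        rw [Complex.ofReal_zero]
        exact K3
      · have := K1 _ hs.2 (Complex.ofReal_ne_zero.mpr hs.1.ne')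
        have h2 := this.2.2.2
        show ((1 - s : ℝ) : ℂ) ∈ spectrum ℂ (1 - C * Pr - (1 - Pr))
        rwa [show ((1 - s : ℝ) : ℂ) = 1 - (s : ℝ) by push_cast; ring]
  have hgr : IsGreatest R (1 - sInf T) := by
    constructor
    · rw [hReq]
      exact Set.mem_insert_iff.mpr (Or.inr ⟨sInf T, hm, rfl⟩)
    · intro r hr
      rw [hReq] at hr
      rcases hr with rfl | ⟨s, hs, rfl⟩
      · linarith [hmIoo.2]
      · have : sInf T ≤ s := csInf_le hTfin.bddBelow hs
        show 1 - s ≤ 1 - sInf T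
        linarith
  have hlamMax : lamMax (1 - C * Pr - (1 - Pr)) = 1 - sInf T := hgr.csSup_eq
  have himg : (fun μ : ℂ => ‖μ‖) '' spectrum ℂ (1 - C * Pr - (1 - Pr)) = R := by
    ext r
    constructor
    · rintro ⟨μ, hμ, rfl⟩
      by_cases hμ0 : μ = 0
      · subst hμ0
        show ((‖(0 : ℂ)‖ : ℝ) : ℂ) ∈ spectrum ℂ (1 - C * Pr - (1 - Pr))
        simpa using K3
      · have := K2 μ hμ hμ0
        have hμeq : ((μ.re : ℝ) : ℂ) = μ := Complex.ext (by simp) (by simp [this.1])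
        have habs : ‖μ‖ = μ.re := by
          conv_lhs => rw [← hμeq]
          rw [Complex.norm_real, Real.norm_eq_abs]
          exact abs_of_pos this.2.1
        show ((‖μ‖ : ℝ) : ℂ) ∈ spectrum ℂ (1 - C * Pr - (1 - Pr))
        rw [habs, hμeq]
        exact hμ
    · intro hr
      have hrnn : 0 ≤ r := by
        by_cases hr0 : r = 0
        · exact hr0.ge
        · exact (K2 _ hr (Complex.ofReal_ne_zero.mpr hr0)).2.1.le.trans_eq (by simp)
      refine ⟨(r : ℂ), hr, ?_⟩
      show ‖((r : ℝ) : ℂ)‖ = r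
      rw [Complex.norm_real, Real.norm_eq_abs, abs_of_nonneg hrnn]
  refine ⟨?_, ?_, ?_, ?_⟩
  · show sSup _ = sSup _
    rw [himg]
  · exact hlamMax
  · exact hTsub hm
  · intro μ hμ
    by_cases hμ0 : μ = 0
    · subst hμ0; simp
    · have := K2 μ hμ hμ0
      exact ⟨this.1, this.2.1.le, this.2.2.1⟩
end

section
/- Let M⁻¹A be B-normal, I − M⁻¹A nonsingular, and ‖I − M⁻¹A‖_B < 1. Then for any ν ∈ ℕ, (I − M⁻¹A)^ν (I − (M⁻¹A)⁺)^ν = I − X̂⁻¹B for some matrix X̂⁻¹B which is B-orthogonal with spectrum contained in (0,1), and X̂⁻¹ is HPD; explicitly X̂⁻¹B = I − (I − M̂⁻¹B)^ν where M̂⁻¹B = M⁻¹A + (M⁻¹A)⁺ − (M⁻¹A)(M⁻¹A)⁺. -/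
open Matrix Polynomial
open scoped ComplexOrder

lemma qre_eq_sum {n : ℕ} (y : Fin n → ℂ) :
    (star y ⬝ᵥ y).re = ∑ i, Complex.normSq (y i) := by
  simp [dotProduct, Complex.re_sum, Pi.star_apply, Complex.normSq_apply, mul_comm]

lemma qim_eq_zero {n : ℕ} (y : Fin n → ℂ) : (star y ⬝ᵥ y).im = 0 := by
  simp [dotProduct, Complex.im_sum, Pi.star_apply, mul_comm]

lemma qre_nonneg {n : ℕ} (y : Fin n → ℂ) : 0 ≤ (star y ⬝ᵥ y).re := by
  rw [qre_eq_sum]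
  exact Finset.sum_nonneg fun i _ => Complex.normSq_nonneg _

lemma qre_pos {n : ℕ} {y : Fin n → ℂ} (hy : y ≠ 0) : 0 < (star y ⬝ᵥ y).re := by
  rw [qre_eq_sum]
  obtain ⟨i, hi⟩ := Function.ne_iff.mp hy
  exact Finset.sum_pos' (fun i _ => Complex.normSq_nonneg _)
    ⟨i, Finset.mem_univ i, Complex.normSq_pos.mpr hi⟩

lemma sqrt_qre_eq_norm {n : ℕ} (y : Fin n → ℂ) :
    Real.sqrt ((star y ⬝ᵥ y).re) = ‖(WithLp.equiv 2 (Fin n → ℂ)).symm y‖ := by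
  rw [EuclideanSpace.norm_eq, qre_eq_sum]
  congr 1
  refine Finset.sum_congr rfl fun i _ => ?_
  rw [show ‖(WithLp.equiv 2 (Fin n → ℂ)).symm y i‖ = ‖y i‖ from rfl,
    Complex.sq_norm]

lemma mconj_pow {n : ℕ} {P Q : Matrix (Fin n) (Fin n) ℂ} (h1 : P * Q = 1) (h2 : Q * P = 1)
    (M : Matrix (Fin n) (Fin n) ℂ) (k : ℕ) : (P * M * Q) ^ k = P * M ^ k * Q := by
  induction k with
  | zero => rw [pow_zero, pow_zero, mul_one, h1]
  | succ k ih =>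
      rw [pow_succ, pow_succ, ih]
      calc P * M ^ k * Q * (P * M * Q) = P * M ^ k * (Q * P) * M * Q := by noncomm_ring
      _ = P * (M ^ k * M) * Q := by rw [h2]; noncomm_ring

lemma spec_conj {n : ℕ} {P Q M : Matrix (Fin n) (Fin n) ℂ} (h1 : P * Q = 1) (h2 : Q * P = 1) :
    spectrum ℂ (P * M * Q) = spectrum ℂ M := by
  have := spectrum.units_conjugate (R := ℂ) (u := ⟨P, Q, h1, h2⟩) (a := M)
  simpa using this

lemma isUnit_ct {n : ℕ} {P : Matrix (Fin n) (Fin n) ℂ} (hP : IsUnit P) : IsUnit Pᴴ := by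
  rw [Matrix.isUnit_iff_isUnit_det] at hP ⊢
  rw [Matrix.det_conjTranspose]
  exact hP.star

lemma posDef_conj {n : ℕ} {A P : Matrix (Fin n) (Fin n) ℂ} (hA : A.PosDef) (hP : IsUnit P) :
    (P * A * Pᴴ).PosDef := by
  refine Matrix.PosDef.of_dotProduct_mulVec_pos (Matrix.isHermitian_mul_mul_conjTranspose P hA.1) fun x hx => ?_
  have hxe : Pᴴ *ᵥ x ≠ 0 := by
    intro h
    exact hx ((Matrix.mulVec_injective_iff_isUnit.mpr (isUnit_ct hP)).eq_iff'
      (Matrix.mulVec_zero _) |>.mp h)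
  have := hA.dotProduct_mulVec_pos hxe
  simpa only [Matrix.star_mulVec, Matrix.dotProduct_mulVec, Matrix.vecMul_vecMul,
    Matrix.conjTranspose_conjTranspose] using this

open scoped MatrixOrder in
lemma exists_sqrt_B {n : ℕ} {B : Matrix (Fin n) (Fin n) ℂ} (hB : B.PosSemidef) :
    ∃ S : Matrix (Fin n) (Fin n) ℂ, S * S = B ∧ Sᴴ = S :=
  ⟨CFC.sqrt B, CFC.sqrt_mul_sqrt_self B hB.nonneg, (CFC.sqrt_nonneg B).posSemidef.1⟩

theorem stmt19 {n : ℕ} (A Minv B : Matrix (Fin n) (Fin n) ℂ)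
    (hB : B.PosDef) (hM : IsUnit Minv)
    (hnormal : (Minv * A) * badj B (Minv * A) = badj B (Minv * A) * (Minv * A))
    (hinv : IsUnit (1 - Minv * A)) (hsm : bnormM B (1 - Minv * A) < 1)
    (ν : ℕ) (hν : 1 ≤ ν) :
    (1 - Minv * A) ^ ν * (1 - badj B (Minv * A)) ^ ν =
      1 - (1 - (1 - (Minv * A + badj B (Minv * A) - (Minv * A) * badj B (Minv * A))) ^ ν) ∧
    badj B (1 - (1 - (Minv * A + badj B (Minv * A) - (Minv * A) * badj B (Minv * A))) ^ ν) =
      1 - (1 - (Minv * A + badj B (Minv * A) - (Minv * A) * badj B (Minv * A))) ^ ν ∧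
    (∀ μ ∈ spectrum ℂ
        (1 - (1 - (Minv * A + badj B (Minv * A) - (Minv * A) * badj B (Minv * A))) ^ ν),
        μ.im = 0 ∧ 0 < μ.re ∧ μ.re < 1) ∧
    ((1 - (1 - (Minv * A + badj B (Minv * A) - (Minv * A) * badj B (Minv * A))) ^ ν)
        * B⁻¹).PosDef := by
  classical
  set T : Matrix (Fin n) (Fin n) ℂ := Minv * A with hT
  set Tad : Matrix (Fin n) (Fin n) ℂ := badj B T with hTad
  set E : Matrix (Fin n) (Fin n) ℂ := 1 - T with hE
  set F : Matrix (Fin n) (Fin n) ℂ := 1 - Tad with hF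
  -- basic facts about B and its square root
  have hBu : IsUnit B := hB.isUnit
  have hBdet : IsUnit B.det := (Matrix.isUnit_iff_isUnit_det B).mp hBu
  have hB1 : B⁻¹ * B = 1 := Matrix.nonsing_inv_mul B hBdet
  have hB2 : B * B⁻¹ = 1 := Matrix.mul_nonsing_inv B hBdet
  have hBH : Bᴴ = B := hB.1
  have hBiH : (B⁻¹)ᴴ = B⁻¹ := by
    rw [Matrix.conjTranspose_nonsing_inv, hBH]
  -- the key substitution: 1 - M̂ = E * F
  have hEF : E * F = (1 : Matrix (Fin n) (Fin n) ℂ) - (T + Tad - T * Tad) := by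
    rw [hE, hF]
    simp only [mul_sub, sub_mul, mul_one, one_mul]
    abel
  rw [← hEF, sub_sub_cancel]
  -- commutation
  have hcomm : E * F = F * E := by
    have hFE : F * E = (1 : Matrix (Fin n) (Fin n) ℂ) - (T + Tad - T * Tad) := by
      rw [hE, hF]
      simp only [mul_sub, sub_mul, mul_one, one_mul]
      rw [← hnormal]
      abel
    rw [hEF, hFE]
  -- square root of B
  have hPSD := hB.posSemidef
  obtain ⟨S, hS, hSH⟩ := exists_sqrt_B hPSD
  have hSu : IsUnit S := by
    rw [Matrix.isUnit_iff_isUnit_det] at hBu ⊢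
    rw [← hS, Matrix.det_mul] at hBu
    exact isUnit_of_mul_isUnit_left hBu
  have hSdet : IsUnit S.det := (Matrix.isUnit_iff_isUnit_det S).mp hSu
  have hS1 : S⁻¹ * S = 1 := Matrix.nonsing_inv_mul S hSdet
  have hS2 : S * S⁻¹ = 1 := Matrix.mul_nonsing_inv S hSdet
  have hSiu : IsUnit (S⁻¹) := ⟨⟨S⁻¹, S, hS1, hS2⟩, rfl⟩
  have hSiH : (S⁻¹)ᴴ = S⁻¹ := by rw [Matrix.conjTranspose_nonsing_inv, hSH]
  have hBi : B⁻¹ = S⁻¹ * S⁻¹ := by rw [← hS, Matrix.mul_inv_rev]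
  -- cancellation helpers
  have cS1 : ∀ X : Matrix (Fin n) (Fin n) ℂ, S⁻¹ * (S * X) = X := fun X => by
    rw [← Matrix.mul_assoc, hS1, one_mul]
  have cS2 : ∀ X : Matrix (Fin n) (Fin n) ℂ, S * (S⁻¹ * X) = X := fun X => by
    rw [← Matrix.mul_assoc, hS2, one_mul]
  have cB1 : ∀ X : Matrix (Fin n) (Fin n) ℂ, B⁻¹ * (B * X) = X := fun X => by
    rw [← Matrix.mul_assoc, hB1, one_mul]
  have cB2 : ∀ X : Matrix (Fin n) (Fin n) ℂ, B * (B⁻¹ * X) = X := fun X => by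
    rw [← Matrix.mul_assoc, hB2, one_mul]
  -- F as the B-adjoint of E
  have hFE : F = B⁻¹ * Eᴴ * B := by
    rw [hF, hTad, badj, hE, Matrix.conjTranspose_sub, Matrix.conjTranspose_one]
    simp only [mul_sub, sub_mul, mul_one, one_mul, hB1]
  -- the similar matrix C and its adjoint
  set C : Matrix (Fin n) (Fin n) ℂ := S * E * S⁻¹ with hCdef
  have hCH : Cᴴ = S * F * S⁻¹ := by
    rw [hCdef, Matrix.conjTranspose_mul, Matrix.conjTranspose_mul, hSiH, hSH, hFE, hBi, ← hS]
    simp only [Matrix.mul_assoc, cS1, cS2, hS2, mul_one]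
  have hCF : C * Cᴴ = S * (E * F) * S⁻¹ := by
    rw [hCH, hCdef]
    simp only [Matrix.mul_assoc, cS1, cS2]
  have hCFE : Cᴴ * C = S * (F * E) * S⁻¹ := by
    rw [hCH, hCdef]
    simp only [Matrix.mul_assoc, cS1, cS2]
  have hCn : Cᴴ * C = C * Cᴴ := by rw [hCF, hCFE, hcomm]
  set D : Matrix (Fin n) (Fin n) ℂ := C * Cᴴ with hDdef
  have hDH : D.IsHermitian := Matrix.isHermitian_mul_conjTranspose_self C
  have hCu : IsUnit C := (hSu.mul hinv).mul hSiu
  have hDpd : D.PosDef := by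
    have h := posDef_conj (Matrix.PosDef.one (n := Fin n) (R := ℂ)) hCu
    rw [mul_one] at h
    exact h
  -- quadratic form identities
  have hqB : ∀ z : Fin n → ℂ, star z ⬝ᵥ B *ᵥ z = star (S *ᵥ z) ⬝ᵥ (S *ᵥ z) := by
    intro z
    rw [← hS, ← Matrix.mulVec_mulVec, Matrix.dotProduct_mulVec, Matrix.star_mulVec, hSH]
  have hbnv : ∀ z : Fin n → ℂ, bnormV B z = Real.sqrt ((star (S *ᵥ z) ⬝ᵥ (S *ᵥ z)).re) :=
    fun z => by rw [bnormV, hqB]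
  have hSE : ∀ x : Fin n → ℂ, S *ᵥ (E *ᵥ x) = C *ᵥ (S *ᵥ x) := by
    intro x
    rw [Matrix.mulVec_mulVec, Matrix.mulVec_mulVec, hCdef, Matrix.mul_assoc, Matrix.mul_assoc,
      hS1, mul_one]
  -- boundedness of the Rayleigh set
  obtain ⟨K, hK⟩ : ∃ K : ℝ, ∀ w : Fin n → ℂ,
      Real.sqrt ((star (C *ᵥ w) ⬝ᵥ (C *ᵥ w)).re) ≤ K * Real.sqrt ((star w ⬝ᵥ w).re) := by
    refine ⟨‖(Matrix.toEuclideanLin C).toContinuousLinearMap‖, fun w => ?_⟩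
    rw [sqrt_qre_eq_norm, sqrt_qre_eq_norm]
    have h := (Matrix.toEuclideanLin C).toContinuousLinearMap.le_opNorm
      ((WithLp.equiv 2 (Fin n → ℂ)).symm w)
    rw [LinearMap.coe_toContinuousLinearMap'] at h
    exact h
  have hQb : BddAbove {r : ℝ | ∃ x : Fin n → ℂ, x ≠ 0 ∧ r = bnormV B (E.mulVec x) / bnormV B x} := by
    refine ⟨K, fun r hr => ?_⟩
    obtain ⟨x, hx0, rfl⟩ := hr
    have hy0 : S *ᵥ x ≠ 0 := by
      intro h
      apply hx0
      have := congrArg (fun z => S⁻¹ *ᵥ z) h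
      simpa [Matrix.mulVec_mulVec, hS1] using this
    have hq : 0 < Real.sqrt ((star (S *ᵥ x) ⬝ᵥ (S *ᵥ x)).re) :=
      Real.sqrt_pos.mpr (qre_pos hy0)
    rw [hbnv, hbnv, hSE, div_le_iff₀ hq]
    exact hK (S *ᵥ x)
  -- the crucial norm bound for C
  have hub : ∀ y : Fin n → ℂ, y ≠ 0 →
      Real.sqrt ((star (C *ᵥ y) ⬝ᵥ (C *ᵥ y)).re) ≤ bnormM B E * Real.sqrt ((star y ⬝ᵥ y).re) := by
    intro y hy
    have hx0 : S⁻¹ *ᵥ y ≠ 0 := by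
      intro h
      apply hy
      have := congrArg (fun z => S *ᵥ z) h
      simpa [Matrix.mulVec_mulVec, hS2] using this
    have hSx : S *ᵥ (S⁻¹ *ᵥ y) = y := by
      rw [Matrix.mulVec_mulVec, hS2, Matrix.one_mulVec]
    have hmem : Real.sqrt ((star (C *ᵥ y) ⬝ᵥ (C *ᵥ y)).re) / Real.sqrt ((star y ⬝ᵥ y).re) ∈
        {r : ℝ | ∃ x : Fin n → ℂ, x ≠ 0 ∧ r = bnormV B (E.mulVec x) / bnormV B x} := by
      refine ⟨S⁻¹ *ᵥ y, hx0, ?_⟩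
      rw [hbnv, hbnv, hSE, hSx]
    have h1 := le_csSup hQb hmem
    have hq : 0 < Real.sqrt ((star y ⬝ᵥ y).re) := Real.sqrt_pos.mpr (qre_pos hy)
    rw [div_le_iff₀ hq] at h1
    exact h1
  -- eigenvalue bounds
  set d : Fin n → ℝ := hDH.eigenvalues with hd
  have hd0 : ∀ i, 0 < d i := hDpd.eigenvalues_pos
  have hd1 : ∀ i, d i < 1 := by
    intro i
    set v : Fin n → ℂ := ⇑(hDH.eigenvectorBasis i) with hv
    have hv0 : v ≠ 0 := by
      have hnz := hDH.eigenvectorBasis.orthonormal.ne_zero i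
      intro h
      apply hnz
      ext j
      exact congrFun h j
    have hDv : D *ᵥ v = (d i : ℂ) • v := by
      have h := hDH.mulVec_eigenvectorBasis i
      rw [← hv] at h
      rw [h]
      ext j
      simp [Complex.real_smul, hd]
    have e1 : star v ⬝ᵥ D *ᵥ v = (d i : ℂ) * (star v ⬝ᵥ v) := by
      rw [hDv, dotProduct_smul, smul_eq_mul]
    have e2 : star v ⬝ᵥ D *ᵥ v = star (C *ᵥ v) ⬝ᵥ (C *ᵥ v) := by
      rw [← hCn, ← Matrix.mulVec_mulVec, Matrix.dotProduct_mulVec, ← Matrix.star_mulVec]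
    have e3 : d i * (star v ⬝ᵥ v).re = (star (C *ᵥ v) ⬝ᵥ (C *ᵥ v)).re := by
      have h := congrArg Complex.re (e1.symm.trans e2)
      simpa [Complex.mul_re, qim_eq_zero] using h
    have h4 := hub v hv0
    rw [← e3, Real.sqrt_mul (hd0 i).le] at h4
    have hq : 0 < Real.sqrt ((star v ⬝ᵥ v).re) := Real.sqrt_pos.mpr (qre_pos hv0)
    have h5 : Real.sqrt (d i) ≤ bnormM B E := le_of_mul_le_mul_right h4 hq
    have h6 : Real.sqrt (d i) < 1 := lt_of_le_of_lt h5 hsm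
    nlinarith [Real.sq_sqrt (hd0 i).le, Real.sqrt_nonneg (d i)]
  -- unitary diagonalization of D
  set U : Matrix (Fin n) (Fin n) ℂ := ↑(hDH.eigenvectorUnitary) with hUdef
  have hU1 : U * star U = 1 := (Matrix.mem_unitaryGroup_iff).mp hDH.eigenvectorUnitary.2
  have hU2 : star U * U = 1 := (Matrix.mem_unitaryGroup_iff').mp hDH.eigenvectorUnitary.2
  have hUu : IsUnit U := ⟨⟨U, star U, hU1, hU2⟩, rfl⟩
  set w : Fin n → ℂ := fun i => ((1 - d i ^ ν : ℝ) : ℂ) with hwdef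
  have hXU : (1 : Matrix (Fin n) (Fin n) ℂ) - D ^ ν = U * Matrix.diagonal w * star U := by
    have hDn : D ^ ν = U * (Matrix.diagonal (RCLike.ofReal ∘ d)) ^ ν * star U := by
      conv_lhs => rw [hDH.spectral_theorem, Unitary.conjStarAlgAut_apply]
      rw [mconj_pow hU1 hU2]
    have hkey : U * Matrix.diagonal w * star U =
        1 - U * Matrix.diagonal ((RCLike.ofReal ∘ d) ^ ν) * star U := by
      have hw' : Matrix.diagonal w =
          (1 : Matrix (Fin n) (Fin n) ℂ) - Matrix.diagonal ((RCLike.ofReal ∘ d) ^ ν) := by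
        have hfun : w = fun i => (1 : ℂ) - ((RCLike.ofReal ∘ d) ^ ν) i := by
          funext i
          show ((1 - d i ^ ν : ℝ) : ℂ) = 1 - ((d i : ℂ)) ^ ν
          push_cast
          ring
        rw [hfun, ← Matrix.diagonal_one, Matrix.diagonal_sub]
      rw [hw', mul_sub, sub_mul, mul_one, hU1]
    rw [hDn, Matrix.diagonal_pow, hkey]
  have hEFD : E * F = S⁻¹ * D * S := by
    rw [hCF]
    simp only [Matrix.mul_assoc, cS1, cS2, hS1, hS2, mul_one]
  have hXconj : (1 : Matrix (Fin n) (Fin n) ℂ) - (E * F) ^ ν = S⁻¹ * (1 - D ^ ν) * S := by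
    rw [hEFD, mconj_pow hS1 hS2, mul_sub, sub_mul, mul_one, hS1]
  have hYpd : ((1 : Matrix (Fin n) (Fin n) ℂ) - D ^ ν).PosDef := by
    rw [hXU]
    have hdiag : (Matrix.diagonal w).PosDef := by
      rw [Matrix.posDef_diagonal_iff]
      intro i
      have hwi : w i = ((1 - d i ^ ν : ℝ) : ℂ) := rfl
      rw [hwi]
      have h1 : d i ^ ν < 1 := pow_lt_one₀ (hd0 i).le (hd1 i) (Nat.one_le_iff_ne_zero.mp hν)
      exact Complex.zero_lt_real.mpr (by linarith)
    have h := posDef_conj hdiag hUu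
    rwa [← Matrix.star_eq_conjTranspose] at h
  refine ⟨((show Commute E F from hcomm).mul_pow ν).symm, ?_, ?_, ?_⟩
  · -- B-self-adjointness
    rw [badj, Matrix.conjTranspose_sub, Matrix.conjTranspose_one, Matrix.conjTranspose_pow]
    have hFH : Fᴴ = B * (E * B⁻¹) := by
      rw [hFE, Matrix.conjTranspose_mul, Matrix.conjTranspose_mul, hBH, hBiH,
        Matrix.conjTranspose_conjTranspose]
    have hEFH : B⁻¹ * (E * F)ᴴ * B = E * F := by
      rw [Matrix.conjTranspose_mul, hFH]
      conv_rhs => rw [hFE]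
      simp only [Matrix.mul_assoc, cB1, cB2]
    rw [mul_sub, sub_mul, mul_one, hB1, ← mconj_pow hB1 hB2, hEFH]
  · -- spectrum
    intro μ hμ
    rw [hXconj, spec_conj hS1 hS2, hXU, spec_conj hU1 hU2, spectrum_diagonal] at hμ
    obtain ⟨i, rfl⟩ := hμ
    have hwi : w i = ((1 - d i ^ ν : ℝ) : ℂ) := rfl
    rw [hwi]
    have h1 : d i ^ ν < 1 := pow_lt_one₀ (hd0 i).le (hd1 i) (Nat.one_le_iff_ne_zero.mp hν)
    have h2 : 0 < d i ^ ν := pow_pos (hd0 i) ν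
    exact ⟨by simp only [Complex.ofReal_im],
      by simp only [Complex.ofReal_re]; linarith,
      by simp only [Complex.ofReal_re]; linarith⟩
  · -- positive definiteness
    rw [hXconj, hBi]
    have heq : S⁻¹ * (1 - D ^ ν) * S * (S⁻¹ * S⁻¹) = S⁻¹ * ((1 - D ^ ν) * (S⁻¹)ᴴ) := by
      rw [hSiH]
      simp only [Matrix.mul_assoc, cS1, cS2]
    rw [heq, ← Matrix.mul_assoc]
    exact posDef_conj hYpd hSiu
end
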